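/- arXiv:1811.07327 — 8 statements merged into one kernel-verified Lean document; each statement's English description precedes it below -/
import Mathlib

section
/- If F is a set of edges of a graph G such that every vertex is incident to at most k edges of F, then there exist k matchings M_1,...,M_k, each a subset of F, such that the set of vertices covered by M_1 ∪ ... ∪ M_k equals the set of vertices covered by F. -/
/-- `M` is a matching of `G`: a set of edges of `G` that are pairwise vertex-disjoint. -/
def IsMatching {V : Type*} (G : SimpleGraph V) (M : Finset (Sym2 V)) : Prop :=
  ↑M ⊆ G.edgeSet ∧ (M : Set (Sym2 V)).Pairwise fun e f => ∀ v : V, ¬(v ∈ e ∧ v ∈ f)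

/-- A vertex `v` is covered by an edge set `F` if some edge of `F` is incident to it. -/
def Covers {V : Type*} (F : Finset (Sym2 V)) (v : V) : Prop := ∃ e ∈ F, v ∈ e

instance {V : Type*} [DecidableEq V] (F : Finset (Sym2 V)) (v : V) : Decidable (Covers F v) :=
  inferInstanceAs (Decidable (∃ e ∈ F, v ∈ e))

/-- A stable (independent) set of vertices. -/
def IsStable {V : Type*} (G : SimpleGraph V) (S : Finset V) : Prop :=
  ∀ u ∈ S, ∀ v ∈ S, ¬ G.Adj u v

/-- The external neighborhood `N(S)`. -/
def nbr {V : Type*} [Fintype V] [DecidableEq V] (G : SimpleGraph V) [DecidableRel G.Adj]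
    (S : Finset V) : Finset V :=
  Finset.univ.filter fun w => w ∉ S ∧ ∃ u ∈ S, G.Adj u w

/-- degree of a vertex in an edge set -/
def degF {V : Type*} [DecidableEq V] (F : Finset (Sym2 V)) (v : V) : ℕ :=
  (F.filter fun e => v ∈ e).card

lemma covers_insert {V : Type*} [DecidableEq V] {e : Sym2 V} {F : Finset (Sym2 V)} {v : V} :
    Covers (insert e F) v ↔ v ∈ e ∨ Covers F v := by
  simp [Covers, Finset.exists_mem_insert]

/-- Step lemma: extend a disjoint family of matchings for `F'` to one for `insert s(a,b) F'`,
when `a` is uncovered by `F'` and `b` has degree `< k` in `F'`. -/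
lemma step_lemma {V : Type*} [DecidableEq V] {G : SimpleGraph V} {k : ℕ}
    {F' : Finset (Sym2 V)} {a b : V} (hG : s(a, b) ∈ G.edgeSet) (hnotin : s(a, b) ∉ F')
    {M : Fin k → Finset (Sym2 V)}
    (hdisj : ∀ i j, i ≠ j → Disjoint (M i) (M j))
    (hprop : ∀ i, IsMatching G (M i) ∧ M i ⊆ F')
    (hcov : ∀ v, Covers F' v ↔ ∃ i, Covers (M i) v)
    (hna : ¬ Covers F' a)
    (hb : (F'.filter fun f => b ∈ f).card < k) :
    ∃ M' : Fin k → Finset (Sym2 V),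
      (∀ i j, i ≠ j → Disjoint (M' i) (M' j)) ∧
      (∀ i, IsMatching G (M' i) ∧ M' i ⊆ insert s(a, b) F') ∧
      ∀ v, Covers (insert s(a, b) F') v ↔ ∃ i, Covers (M' i) v := by
  have hMa : ∀ j, ¬ Covers (M j) a := by
    rintro j ⟨f, hf, hv⟩
    exact hna ⟨f, (hprop j).2 hf, hv⟩
  have hi : ∃ i, ¬ Covers (M i) b := by
    by_contra h
    push_neg at h
    choose g hg1 hg2 using h
    have hinj : Function.Injective g := by
      intro i j hij
      by_contra hne
      exact Finset.disjoint_left.mp (hdisj i j hne) (hg1 i) (hij ▸ hg1 j)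
    have hk : (Finset.univ : Finset (Fin k)).card ≤ (F'.filter fun f => b ∈ f).card := by
      refine Finset.card_le_card_of_injOn g (fun i _ => ?_) hinj.injOn
      exact Finset.mem_filter.mpr ⟨(hprop i).2 (hg1 i), hg2 i⟩
    simp at hk
    omega
  obtain ⟨i, hib⟩ := hi
  refine ⟨fun j => if j = i then insert s(a, b) (M i) else M j, ?_, ?_, ?_⟩
  · intro j j' hne
    have hnm : ∀ j'', s(a, b) ∉ M j'' := fun j'' h => hnotin ((hprop j'').2 h)
    by_cases hj : j = i <;> by_cases hj' : j' = i
    · exact absurd (hj.trans hj'.symm) hne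
    · simp only [if_pos hj, if_neg hj']
      exact Finset.disjoint_insert_left.mpr ⟨hnm j', hdisj i j' fun h => hne (hj.trans h)⟩
    · simp only [if_pos hj', if_neg hj]
      exact (Finset.disjoint_insert_left.mpr
        ⟨hnm j, hdisj i j fun h => hne ((hj'.trans h).symm)⟩).symm
    · simp only [if_neg hj, if_neg hj']
      exact hdisj j j' hne
  · intro j
    by_cases hj : j = i
    · simp only [if_pos hj]
      refine ⟨⟨?_, ?_⟩, Finset.insert_subset_insert _ (hprop i).2⟩
      · intro f hf
        simp only [Finset.coe_insert, Set.mem_insert_iff, Finset.mem_coe] at hf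
        rcases hf with rfl | hf
        · exact hG
        · exact (hprop i).1.1 hf
      · intro x hx y hy hxy v ⟨hvx, hvy⟩
        simp only [Finset.coe_insert, Set.mem_insert_iff, Finset.mem_coe] at hx hy
        have key : ∀ z, z ∈ M i → v ∈ s(a, b) → v ∈ z → False := by
          intro z hz hv1 hv2
          rcases Sym2.mem_iff.mp hv1 with rfl | rfl
          · exact hMa i ⟨z, hz, hv2⟩
          · exact hib ⟨z, hz, hv2⟩
        rcases hx with rfl | hx
        · rcases hy with rfl | hy
          · exact hxy rfl
          · exact key y hy hvx hvy
        · rcases hy with rfl | hy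
          · exact key x hx hvy hvx
          · exact (hprop i).1.2 hx hy hxy v ⟨hvx, hvy⟩
    · simp only [if_neg hj]
      exact ⟨(hprop j).1, (hprop j).2.trans (Finset.subset_insert _ _)⟩
  · intro v
    constructor
    · intro hv
      rcases covers_insert.mp hv with hv | hv
      · refine ⟨i, ?_⟩
        simp only [if_pos]
        exact ⟨s(a, b), Finset.mem_insert_self _ _, hv⟩
      · obtain ⟨j, g, hg, hvg⟩ := (hcov v).mp hv
        refine ⟨j, ?_⟩
        by_cases hj : j = i
        · simp only [if_pos hj]
          exact ⟨g, Finset.mem_insert_of_mem (hj ▸ hg), hvg⟩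
        · simp only [if_neg hj]
          exact ⟨g, hg, hvg⟩
    · rintro ⟨j, g, hg, hvg⟩
      by_cases hj : j = i
      · simp only [if_pos hj, Finset.mem_insert] at hg
        rcases hg with rfl | hg
        · exact ⟨s(a, b), Finset.mem_insert_self _ _, hvg⟩
        · exact ⟨g, Finset.mem_insert_of_mem ((hprop i).2 hg), hvg⟩
      · simp only [if_neg hj] at hg
        exact ⟨g, Finset.mem_insert_of_mem ((hprop j).2 hg), hvg⟩

lemma main_aux {V : Type*} [DecidableEq V] (G : SimpleGraph V) (k : ℕ) :
    ∀ F : Finset (Sym2 V), ↑F ⊆ G.edgeSet → (∀ v : V, degF F v ≤ k) →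
    ∃ M : Fin k → Finset (Sym2 V),
      (∀ i j, i ≠ j → Disjoint (M i) (M j)) ∧
      (∀ i, IsMatching G (M i) ∧ M i ⊆ F) ∧
      ∀ v : V, (Covers F v ↔ ∃ i, Covers (M i) v) := by
  intro F
  induction F using Finset.strongInduction with
  | _ F ih =>
    intro hF hdeg
    rcases Finset.eq_empty_or_nonempty F with rfl | ⟨e, he⟩
    · refine ⟨fun _ => ∅, by simp, by simp [IsMatching, Set.pairwise_empty], fun v => ?_⟩
      simp [Covers]
    · induction e using Sym2.ind with
      | _ a b =>
        set F' := F.erase s(a, b) with hF'def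
        have hins : insert s(a, b) F' = F := Finset.insert_erase he
        have hss : F' ⊂ F := Finset.erase_ssubset he
        have hF'G : ↑F' ⊆ G.edgeSet := Set.Subset.trans (by exact_mod_cast hss.subset) hF
        have hdeg' : ∀ v, degF F' v ≤ k := fun v =>
          le_trans (Finset.card_le_card (Finset.filter_subset_filter _ (Finset.erase_subset _ _))) (hdeg v)
        obtain ⟨M, hdisj, hprop, hcov⟩ := ih F' hss hF'G hdeg'
        have hnotin : s(a, b) ∉ F' := Finset.notMem_erase _ _
        have hG : s(a, b) ∈ G.edgeSet := hF he
        have hcount : ∀ c : V, c ∈ s(a, b) → (F'.filter fun f => c ∈ f).card < k := by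
          intro c hc
          have hmem : s(a, b) ∈ F.filter fun f => c ∈ f := Finset.mem_filter.mpr ⟨he, hc⟩
          have h1 : 1 ≤ (F.filter fun f => c ∈ f).card := Finset.card_pos.mpr ⟨_, hmem⟩
          have h2 : (F.filter fun f => c ∈ f).card ≤ k := hdeg c
          have h3 : (F'.filter fun f => c ∈ f).card = (F.filter fun f => c ∈ f).card - 1 := by
            rw [hF'def, Finset.filter_erase, Finset.card_erase_of_mem hmem]
          omega
        by_cases hca : Covers F' a
        · by_cases hcb : Covers F' b
          · refine ⟨M, hdisj, fun i => ⟨(hprop i).1, (hprop i).2.trans hss.subset⟩, fun v => ?_⟩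
            rw [← hins, covers_insert]
            rw [← hcov v]
            constructor
            · rintro (hv | hv)
              · rcases Sym2.mem_iff.mp hv with rfl | rfl
                · exact hca
                · exact hcb
              · exact hv
            · exact Or.inr
          · -- b uncovered: swap roles
            have hG' : s(b, a) ∈ G.edgeSet := Sym2.eq_swap ▸ hG
            have hnotin' : s(b, a) ∉ F' := Sym2.eq_swap ▸ hnotin
            obtain ⟨M', h1, h2, h3⟩ := step_lemma hG' hnotin' hdisj hprop hcov hcb
              (hcount a (Sym2.mem_mk_left a b))
            rw [show insert s(b, a) F' = F from (Sym2.eq_swap (a := b) (b := a)) ▸ hins] at h2 h3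
            exact ⟨M', h1, h2, h3⟩
        · obtain ⟨M', h1, h2, h3⟩ := step_lemma hG hnotin hdisj hprop hcov hca
            (hcount b (Sym2.mem_mk_right a b))
          rw [hins] at h2 h3
          exact ⟨M', h1, h2, h3⟩

theorem stmt_1 {V : Type*} [Fintype V] [DecidableEq V] (G : SimpleGraph V)
    (k : ℕ) (F : Finset (Sym2 V)) (hF : ↑F ⊆ G.edgeSet)
    (hdeg : ∀ v : V, degF F v ≤ k) :
    ∃ M : Fin k → Finset (Sym2 V),
      (∀ i, IsMatching G (M i) ∧ M i ⊆ F) ∧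
      ∀ v : V, (Covers F v ↔ ∃ i, Covers (M i) v) := by
  obtain ⟨M, _, h2, h3⟩ := main_aux G k F hF hdeg
  exact ⟨M, h2, h3⟩
end

section
/- Let G be a connected graph and k ≥ 2 an integer. There exist k matchings in G whose union covers every vertex of G if and only if |S| ≤ k·|N(S)| for every stable set S of G. -/
/-!
For the easy direction, an edge at `v ∈ S` of a matching covering `v` ends in `N(S)` because `S`
is stable, and the matching together with that endpoint determines `v`.

Conversely, let `F ⊆ E(G)` have maximum degree at most `k` and cover as many vertices as possible.
If a vertex `u` is missed, grow a set `S ∋ u` of vertices each of which can be made the missed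
vertex by switching `F` along an alternating path (put a `G`-edge `yc` in, take an `F`-edge `cz`
out), the switch changing `F` only near `S`. Maximality of `F` forces every neighbour of `S` to
have degree exactly `k`, all its `F`-neighbours being leaves that lie in `S`. As `k ≥ 2` this makes
`S` stable, and counting leaves gives `|S| > k |N(S)|`. So `F` covers `V`; an inclusion-minimal
such `F` is a star forest, and labelling the edges at each star centre injectively by `Fin k`
splits it into `k` matchings.
-/

namespace KMatchingCover

open Finset

lemma exists_injOn_fin_of_card_le {α : Type*} {s : Finset α} {k : ℕ} (hk : 0 < k)
    (hs : #s ≤ k) : ∃ f : α → Fin k, Set.InjOn f s := by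
  have : Nonempty (Fin k) := ⟨⟨0, hk⟩⟩
  obtain ⟨f, -, hf⟩ := s.finite_toSet.exists_injOn_of_encard_le (t := (Set.univ : Set (Fin k)))
    (by simpa using hs)
  exact ⟨f, hf⟩

section Degree

variable {V : Type*} [DecidableEq V] {F F' : Finset (Sym2 V)} {S : Finset V} {e f : Sym2 V}
  {c v y z : V}

lemma degF_eq_zero_iff : degF F v = 0 ↔ ¬Covers F v := by
  simp [degF, Covers, Finset.filter_eq_empty_iff]

lemma one_le_degF (he : e ∈ F) (hv : v ∈ e) : 1 ≤ degF F v :=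
  card_pos.mpr ⟨e, mem_filter.mpr ⟨he, hv⟩⟩

lemma one_lt_degF (he : e ∈ F) (hf : f ∈ F) (hef : e ≠ f) (hve : v ∈ e) (hvf : v ∈ f) :
    1 < degF F v :=
  one_lt_card.mpr ⟨e, mem_filter.mpr ⟨he, hve⟩, f, mem_filter.mpr ⟨hf, hvf⟩, hef⟩

lemma degF_le_of_subset (h : F' ⊆ F) (v : V) : degF F' v ≤ degF F v :=
  card_le_card (filter_subset_filter _ h)

lemma degF_insert (he : e ∉ F) (v : V) :
    degF (insert e F) v = degF F v + if v ∈ e then 1 else 0 := by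
  unfold degF
  rw [filter_insert]
  split_ifs with hv
  · exact card_insert_of_notMem (fun h => he (mem_filter.mp h).1)
  · rfl

lemma degF_erase_add (hf : f ∈ F) (v : V) :
    degF (F.erase f) v + (if v ∈ f then 1 else 0) = degF F v := by
  unfold degF
  rw [filter_erase]
  split_ifs with hv
  · exact card_erase_add_one (mem_filter.mpr ⟨hf, hv⟩)
  · rw [add_zero, erase_eq_of_notMem (by simp [hv])]

lemma degF_insert_erase (he : e ∉ F.erase f) (hf : f ∈ F) (v : V) :
    degF (insert e (F.erase f)) v + (if v ∈ f then 1 else 0) =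
      degF F v + if v ∈ e then 1 else 0 := by
  rw [degF_insert he, add_right_comm, degF_erase_add hf]

lemma covers_erase_of_one_lt_degF (hv : 1 < degF F v) (e : Sym2 V) : Covers (F.erase e) v := by
  obtain ⟨f, hf, hfe⟩ := exists_mem_ne hv e
  exact ⟨f, mem_erase.mpr ⟨hfe, (mem_filter.mp hf).1⟩, (mem_filter.mp hf).2⟩

def AgreesOutside (F F' : Finset (Sym2 V)) (S : Finset V) : Prop :=
  (∀ e, (∀ v ∈ e, v ∉ S) → (e ∈ F ↔ e ∈ F')) ∧ (∀ v ∉ S, degF F' v = degF F v) ∧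
    ∀ v ∈ S, degF F' v ≤ 1

lemma agreesOutside_self (h : ∀ v ∈ S, degF F v ≤ 1) : AgreesOutside F F S :=
  ⟨fun _ _ => Iff.rfl, fun _ _ => rfl, h⟩

lemma AgreesOutside.mono {T : Finset V} (h : AgreesOutside F F' S) (hST : S ⊆ T)
    (hT : ∀ v ∈ T, v ∉ S → degF F v ≤ 1) : AgreesOutside F F' T := by
  refine ⟨fun e he => h.1 e fun v hv hvS => he v hv (hST hvS),
    fun v hv => h.2.1 v fun hvS => hv (hST hvS), fun v hv => ?_⟩
  by_cases hvS : v ∈ S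
  · exact h.2.2 v hvS
  · exact (h.2.1 v hvS).trans_le (hT v hv hvS)

lemma AgreesOutside.switch (h : AgreesOutside F F' S) (hy : y ∈ S) (hyF' : ¬Covers F' y)
    (hc : c ∉ S) (hz : z ∉ S) (hcz : s(c, z) ∈ F')
    (hzF'' : ¬Covers (insert s(y, c) (F'.erase s(c, z))) z) :
    AgreesOutside F (insert s(y, c) (F'.erase s(c, z))) (insert z S) := by
  have hyc_notMem : s(y, c) ∉ F'.erase s(c, z) :=
    fun h => hyF' ⟨_, mem_of_mem_erase h, Sym2.mem_mk_left y c⟩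
  have hdeg := degF_insert_erase hyc_notMem hcz
  refine ⟨fun e he => ?_, fun v hv => ?_, fun v hv => ?_⟩
  · have hey : e ≠ s(y, c) := by
      rintro rfl; exact he y (Sym2.mem_mk_left y c) (mem_insert_of_mem hy)
    have hez : e ≠ s(c, z) := by
      rintro rfl; exact he z (Sym2.mem_mk_right c z) (mem_insert_self z S)
    rw [h.1 e fun v hv hvS => he v hv (mem_insert_of_mem hvS), mem_insert, mem_erase]
    tauto
  · obtain ⟨hvz, hvS⟩ : v ≠ z ∧ v ∉ S := by simpa using hv
    have hvy : v ≠ y := by rintro rfl; exact hvS hy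
    have hiff : v ∈ s(c, z) ↔ v ∈ s(y, c) := by simp [hvz, hvy, or_comm]
    have h1 := hdeg v
    simp only [hiff] at h1
    rw [← h.2.1 v hvS]
    omega
  · rcases mem_insert.mp hv with rfl | hvS
    · exact (degF_eq_zero_iff.mpr hzF'').trans_le zero_le_one
    · have h1 := hdeg v
      have h2 := h.2.2 v hvS
      by_cases hvy : v = y
      · subst hvy
        have := degF_eq_zero_iff.mpr hyF'
        split_ifs at h1 <;> omega
      · have hvc : v ≠ c := by rintro rfl; exact hc hvS
        rw [if_neg (show v ∉ s(y, c) by simp [hvy, hvc])] at h1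
        split_ifs at h1 <;> omega

end Degree

variable {V : Type*} [Fintype V] [DecidableEq V] {G : SimpleGraph V} {k : ℕ}
  {F : Finset (Sym2 V)} {S : Finset V} {c v y z : V}

def coveredSet (F : Finset (Sym2 V)) : Finset V := univ.filter (Covers F)

@[simp]
lemma mem_coveredSet : v ∈ coveredSet F ↔ Covers F v := by simp [coveredSet]

variable (G k) in
def IsDegreeBounded (F : Finset (Sym2 V)) : Prop :=
  ↑F ⊆ G.edgeSet ∧ ∀ v, degF F v ≤ k

lemma card_le_mul_card_nbr [DecidableRel G.Adj] {M : Fin k → Finset (Sym2 V)}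
    (hM : ∀ i, IsMatching G (M i)) (hcov : ∀ v, ∃ i, Covers (M i) v) (hS : IsStable G S) :
    #S ≤ k * #(nbr G S) := by
  calc #S ≤ #((univ : Finset (Fin k)) ×ˢ nbr G S) := by
        refine card_le_card_of_forall_subsingleton (fun v p => s(v, p.2) ∈ M p.1)
          (fun v hv => ?_) fun p _ v hv v' hv' => ?_
        · obtain ⟨i, e, he, hve⟩ := hcov v
          obtain ⟨w, rfl⟩ := Sym2.mem_iff_exists.mp hve
          have hvw : G.Adj v w := G.mem_edgeSet.mp ((hM i).1 he)
          refine ⟨(i, w), mem_product.mpr ⟨mem_univ i, ?_⟩, he⟩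
          exact mem_filter.mpr ⟨mem_univ w, fun hw => hS v hv w hw hvw, v, hv, hvw⟩
        · by_contra hne
          refine (hM p.1).2 hv.2 hv'.2 (fun h => hne (Sym2.congr_left.mp h)) p.2 ?_
          exact ⟨Sym2.mem_mk_right v p.2, Sym2.mem_mk_right v' p.2⟩
    _ = k * #(nbr G S) := by rw [card_product, card_univ, Fintype.card_fin]

lemma exists_star_cover (hF : IsDegreeBounded G k F) (hcov : ∀ v, Covers F v) :
    ∃ F₀, IsDegreeBounded G k F₀ ∧ (∀ v, Covers F₀ v) ∧
      ∀ v w, s(v, w) ∈ F₀ → degF F₀ v ≤ 1 ∨ degF F₀ w ≤ 1 := by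
  classical
  obtain ⟨F₀, hF₀, hmin⟩ := exists_min_image (F.powerset.filter fun F₀ => ∀ v, Covers F₀ v) card
    ⟨F, mem_filter.mpr ⟨mem_powerset_self F, hcov⟩⟩
  obtain ⟨hsub, hcov₀⟩ := mem_filter.mp hF₀
  rw [mem_powerset] at hsub
  refine ⟨F₀, ⟨(coe_subset.mpr hsub).trans hF.1,
    fun v => (degF_le_of_subset hsub v).trans (hF.2 v)⟩, hcov₀, fun v w hvw => ?_⟩
  by_contra! h
  have hcov' : ∀ x, Covers (F₀.erase s(v, w)) x := by
    intro x
    obtain ⟨e, he, hxe⟩ := hcov₀ x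
    by_cases hev : e = s(v, w)
    · subst hev
      rcases Sym2.mem_iff.mp hxe with rfl | rfl
      exacts [covers_erase_of_one_lt_degF h.1 _, covers_erase_of_one_lt_degF h.2 _]
    · exact ⟨e, mem_erase.mpr ⟨hev, he⟩, hxe⟩
  have := hmin _ (mem_filter.mpr ⟨mem_powerset.mpr ((erase_subset _ _).trans hsub), hcov'⟩)
  rw [card_erase_of_mem hvw] at this
  have := card_pos.mpr ⟨_, hvw⟩
  omega

lemma exists_matchings_of_star_cover (hk : 0 < k) (hF : IsDegreeBounded G k F)
    (hcov : ∀ v, Covers F v) (hstar : ∀ v w, s(v, w) ∈ F → degF F v ≤ 1 ∨ degF F w ≤ 1) :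
    ∃ M : Fin k → Finset (Sym2 V), (∀ i, IsMatching G (M i)) ∧ ∀ v, ∃ i, Covers (M i) v := by
  choose f hf using fun v => exists_injOn_fin_of_card_le hk (hF.2 v)
  -- An edge gets the label its centre gives it; an edge joining two leaves lies in every `M i`.
  refine ⟨fun i => F.filter fun e => ∀ v ∈ e, 2 ≤ degF F v → f v e = i,
    fun i => ⟨fun e he => hF.1 (mem_filter.mp he).1, fun e he e' he' hne v hv => ?_⟩, fun v => ?_⟩
  · obtain ⟨heF, hei⟩ := mem_filter.mp he
    obtain ⟨he'F, he'i⟩ := mem_filter.mp he'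
    have hv2 := one_lt_degF heF he'F hne hv.1 hv.2
    exact hne (hf v (mem_filter.mpr ⟨heF, hv.1⟩) (mem_filter.mpr ⟨he'F, hv.2⟩)
      ((hei v hv.1 hv2).trans (he'i v hv.2 hv2).symm))
  · obtain ⟨e, he, hve⟩ := hcov v
    obtain ⟨w, rfl⟩ := Sym2.mem_iff_exists.mp hve
    have hlabel : ∀ x, degF F x ≤ 1 → ∀ y, s(x, y) = s(v, w) →
        ∃ i, ∀ u ∈ s(v, w), 2 ≤ degF F u → f u s(v, w) = i := fun x hx y hxy =>
      ⟨f y s(v, w), fun u hu hu2 => by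
        rw [← hxy] at hu
        rcases Sym2.mem_iff.mp hu with rfl | rfl
        · omega
        · rfl⟩
    obtain ⟨i, hi⟩ := (hstar v w he).elim (fun h => hlabel v h w rfl)
      fun h => hlabel w h v Sym2.eq_swap
    exact ⟨i, _, mem_filter.mpr ⟨he, hi⟩, hve⟩

variable (G k) in
def IsMaxCover (F : Finset (Sym2 V)) : Prop :=
  IsDegreeBounded G k F ∧ ∀ F', IsDegreeBounded G k F' → #(coveredSet F') ≤ #(coveredSet F)

variable (G k) in
lemma exists_isMaxCover : ∃ F, IsMaxCover G k F := by
  classical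
  obtain ⟨F, hF, hmax⟩ := exists_max_image ((G.edgeFinset.powerset).filter (IsDegreeBounded G k))
    (fun F => #(coveredSet F)) ⟨∅, by simp [IsDegreeBounded, degF]⟩
  refine ⟨F, (mem_filter.mp hF).2, fun F' hF' => hmax F' ?_⟩
  exact mem_filter.mpr ⟨mem_powerset.mpr fun e he => by simpa using hF'.1 he, hF'⟩

lemma IsMaxCover.degF_eq_of_adj (hF : IsMaxCover G k F) (hy : ¬Covers F y) (hyc : G.Adj y c) :
    degF F c = k := by
  have hyc_notMem : s(y, c) ∉ F := fun h => hy ⟨_, h, Sym2.mem_mk_left y c⟩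
  refine le_antisymm (hF.1.2 c) (not_lt.mp fun hlt => ?_)
  have hbounded : IsDegreeBounded G k (insert s(y, c) F) := by
    refine ⟨?_, fun v => ?_⟩
    · rw [coe_insert, Set.insert_subset_iff]
      exact ⟨G.mem_edgeSet.mpr hyc, hF.1.1⟩
    rw [degF_insert hyc_notMem]
    split_ifs with hv
    · rcases Sym2.mem_iff.mp hv with rfl | rfl
      · rw [degF_eq_zero_iff.mpr hy]; omega
      · omega
    · exact hF.1.2 v
  have hssub : coveredSet F ⊂ coveredSet (insert s(y, c) F) := by
    refine ssubset_of_subset_of_ne (fun v hv => ?_) fun h => hy ?_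
    · obtain ⟨e, he, hve⟩ := mem_coveredSet.mp hv
      exact mem_coveredSet.mpr ⟨e, mem_insert_of_mem he, hve⟩
    · exact mem_coveredSet.mp
        (h ▸ mem_coveredSet.mpr ⟨_, mem_insert_self _ _, Sym2.mem_mk_left y c⟩)
  exact (hF.2 _ hbounded).not_gt (card_lt_card hssub)

lemma IsMaxCover.switch (hF : IsMaxCover G k F) (hy : ¬Covers F y) (hyc : G.Adj y c)
    (hcz : s(c, z) ∈ F) :
    IsMaxCover G k (insert s(y, c) (F.erase s(c, z))) ∧
      ¬Covers (insert s(y, c) (F.erase s(c, z))) z := by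
  set F' := insert s(y, c) (F.erase s(c, z))
  have hyc_notMem : s(y, c) ∉ F.erase s(c, z) :=
    fun h => hy ⟨_, mem_of_mem_erase h, Sym2.mem_mk_left y c⟩
  have hdeg : ∀ v, degF F' v + (if v ∈ s(c, z) then 1 else 0) =
      degF F v + if v ∈ s(y, c) then 1 else 0 := degF_insert_erase hyc_notMem hcz
  have hck : degF F c = k := hF.degF_eq_of_adj hy hyc
  have hbounded : IsDegreeBounded G k F' := by
    refine ⟨?_, fun v => ?_⟩
    · rw [coe_insert, coe_erase, Set.insert_subset_iff]
      exact ⟨G.mem_edgeSet.mpr hyc, Set.sdiff_subset.trans hF.1.1⟩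
    · have h := hdeg v
      have hy0 := degF_eq_zero_iff.mpr hy
      have hk1 := one_le_degF hcz (Sym2.mem_mk_left c z)
      by_cases hvy : v = y
      · subst hvy
        rw [if_pos (Sym2.mem_mk_left v c)] at h
        split_ifs at h <;> omega
      by_cases hvc : v = c
      · subst hvc
        rw [if_pos (Sym2.mem_mk_left v z), if_pos (Sym2.mem_mk_right y v)] at h
        omega
      · rw [if_neg (show v ∉ s(y, c) by simp [hvy, hvc])] at h
        have := hF.1.2 v
        split_ifs at h <;> omega
  have hcov : coveredSet F ⊆ insert z (coveredSet F') := by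
    intro v hv
    obtain ⟨e, he, hve⟩ := mem_coveredSet.mp hv
    by_cases hez : e = s(c, z)
    · subst hez
      rcases Sym2.mem_iff.mp hve with rfl | rfl
      · exact mem_insert_of_mem
          (mem_coveredSet.mpr ⟨_, mem_insert_self _ _, Sym2.mem_mk_right y v⟩)
      · exact mem_insert_self _ _
    · exact mem_insert_of_mem
        (mem_coveredSet.mpr ⟨e, mem_insert_of_mem (mem_erase.mpr ⟨hez, he⟩), hve⟩)
  have hyF' : y ∈ coveredSet F' :=
    mem_coveredSet.mpr ⟨_, mem_insert_self _ _, Sym2.mem_mk_left y c⟩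
  have hzF' : z ∉ coveredSet F' := by
    intro hz
    have : coveredSet F ⊂ coveredSet F' :=
      ⟨fun v hv => by simpa [hz] using hcov hv, fun h => hy (mem_coveredSet.mp (h hyF'))⟩
    exact (hF.2 _ hbounded).not_gt (card_lt_card this)
  refine ⟨⟨hbounded, fun F'' hF'' => (hF.2 F'' hF'').trans ?_⟩,
    fun h => hzF' (mem_coveredSet.mpr h)⟩
  calc #(coveredSet F) ≤ #(insert z ((coveredSet F').erase y)) := card_le_card fun v hv => by
        rcases mem_insert.mp (hcov hv) with rfl | h
        · exact mem_insert_self _ _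
        · exact mem_insert_of_mem (mem_erase.mpr ⟨fun hvy => hy (hvy ▸ mem_coveredSet.mp hv), h⟩)
    _ ≤ #((coveredSet F').erase y) + 1 := card_insert_le _ _
    _ = #(coveredSet F') := card_erase_add_one hyF'

variable (G k) in
def IsUncoverable (F : Finset (Sym2 V)) (S : Finset V) : Prop :=
  (∀ v ∈ S, degF F v ≤ 1) ∧
    ∀ y ∈ S, ∃ F', IsMaxCover G k F' ∧ ¬Covers F' y ∧ AgreesOutside F F' S

lemma isUncoverable_singleton (hF : IsMaxCover G k F) (hy : ¬Covers F y) :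
    IsUncoverable G k F {y} := by
  have hdeg : ∀ v ∈ ({y} : Finset V), degF F v ≤ 1 := fun v hv => by
    rw [mem_singleton.mp hv, degF_eq_zero_iff.mpr hy]; exact zero_le_one
  exact ⟨hdeg, fun v hv => ⟨F, hF, mem_singleton.mp hv ▸ hy, agreesOutside_self hdeg⟩⟩

lemma IsUncoverable.degF_eq_of_adj (hk : 2 ≤ k) (hS : IsUncoverable G k F S) (hy : y ∈ S)
    (hyc : G.Adj y c) : degF F c = k ∧ c ∉ S := by
  obtain ⟨F', hF', hyF', hagree⟩ := hS.2 y hy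
  have hck := hF'.degF_eq_of_adj hyF' hyc
  have hc : c ∉ S := fun hc => by have := hagree.2.2 c hc; omega
  exact ⟨(hagree.2.1 c hc).symm.trans hck, hc⟩

lemma IsUncoverable.insert (hk : 2 ≤ k) (hS : IsUncoverable G k F S) (hy : y ∈ S)
    (hyc : G.Adj y c) (hcz : s(c, z) ∈ F) (hz : z ∉ S) : IsUncoverable G k F (insert z S) := by
  obtain ⟨F', hF', hyF', hagree⟩ := hS.2 y hy
  have hc := (hS.degF_eq_of_adj hk hy hyc).2
  have hczF' : s(c, z) ∈ F' := (hagree.1 _ fun v hv => by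
    rcases Sym2.mem_iff.mp hv with rfl | rfl <;> assumption).mp hcz
  obtain ⟨hF'', hzF''⟩ := hF'.switch hyF' hyc hczF'
  have hz1 : degF F z ≤ 1 := by
    have hsub := degF_le_of_subset (subset_insert s(y, c) (F'.erase s(c, z))) z
    rw [degF_eq_zero_iff.mpr hzF''] at hsub
    rw [← hagree.2.1 z hz, ← degF_erase_add hczF' z, if_pos (Sym2.mem_mk_right c z)]
    omega
  refine ⟨fun v hv => ?_, fun w hw => ?_⟩
  · rcases mem_insert.mp hv with rfl | hv
    exacts [hz1, hS.1 v hv]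
  · rcases mem_insert.mp hw with rfl | hw
    · exact ⟨_, hF'', hzF'', hagree.switch hy hyF' hc hz hczF' hzF''⟩
    · obtain ⟨F₁, hF₁, hwF₁, hagree₁⟩ := hS.2 w hw
      refine ⟨F₁, hF₁, hwF₁, hagree₁.mono (subset_insert z S) fun v hv hvS => ?_⟩
      rwa [(mem_insert.mp hv).resolve_right hvS]

lemma mul_card_nbr_lt_card [DecidableRel G.Adj] {u : V} (hu : u ∈ S) (huF : ¬Covers F u)
    (hdeg : ∀ c ∈ nbr G S, k ≤ degF F c) (hclosed : ∀ c ∈ nbr G S, ∀ z, s(c, z) ∈ F → z ∈ S)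
    (hS : ∀ v ∈ S, degF F v ≤ 1) : k * #(nbr G S) < #S := by
  set X := (nbr G S).biUnion fun c => F.filter (c ∈ ·)
  have hXF : X ⊆ F := biUnion_subset.mpr fun _ _ => filter_subset _ _
  have hdisj : (nbr G S : Set V).PairwiseDisjoint fun c => F.filter (c ∈ ·) := by
    intro c hc c' hc' hne
    refine disjoint_left.mpr fun e he he' => ?_
    rw [mem_filter] at he he'
    have hc'S := hclosed c hc c' ((Sym2.mem_and_mem_iff hne).mp ⟨he.2, he'.2⟩ ▸ he.1)
    exact (mem_filter.mp hc').2.1 hc'S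
  calc k * #(nbr G S) ≤ ∑ c ∈ nbr G S, degF F c := by
        rw [mul_comm, ← smul_eq_mul, ← sum_const]
        exact sum_le_sum hdeg
    _ = #X := (card_biUnion hdisj).symm
    _ ≤ #(S.erase u) := by
        refine card_le_card_of_forall_subsingleton (fun e z => z ∈ e) (fun e he => ?_)
          fun z hz e he e' he' => ?_
        · obtain ⟨c, hc, he⟩ := mem_biUnion.mp he
          obtain ⟨heF, hce⟩ := mem_filter.mp he
          obtain ⟨z, rfl⟩ := Sym2.mem_iff_exists.mp hce
          refine ⟨z, mem_erase.mpr ⟨?_, hclosed c hc z heF⟩, Sym2.mem_mk_right c z⟩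
          rintro rfl
          exact huF ⟨_, heF, Sym2.mem_mk_right c z⟩
        · by_contra hne
          have := hS z (mem_of_mem_erase hz)
          have := one_lt_degF (hXF he.1) (hXF he'.1) hne he.2 he'.2
          omega
    _ < #S := card_erase_lt_of_mem hu

lemma IsMaxCover.covers [DecidableRel G.Adj] (hk : 2 ≤ k) (hF : IsMaxCover G k F)
    (hcond : ∀ S : Finset V, IsStable G S → #S ≤ k * #(nbr G S)) (u : V) : Covers F u := by
  classical
  by_contra hu
  obtain ⟨S, hS, hmax⟩ := exists_max_image (univ.filter fun S => u ∈ S ∧ IsUncoverable G k F S)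
    card ⟨{u}, mem_filter.mpr ⟨mem_univ _, mem_singleton_self u, isUncoverable_singleton hF hu⟩⟩
  obtain ⟨-, huS, hSu⟩ := mem_filter.mp hS
  have hclosed : ∀ y ∈ S, ∀ c, G.Adj y c → ∀ z, s(c, z) ∈ F → z ∈ S := by
    intro y hy c hyc z hcz
    by_contra hz
    have := hmax (insert z S)
      (mem_filter.mpr ⟨mem_univ _, mem_insert_of_mem huS, hSu.insert hk hy hyc hcz hz⟩)
    rw [card_insert_of_notMem hz] at this
    omega
  have hstable : IsStable G S := fun y hy y' hy' hyy' => (hSu.degF_eq_of_adj hk hy hyy').2 hy'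
  refine (hcond S hstable).not_gt
    (mul_card_nbr_lt_card huS hu (fun c hc => ?_) (fun c hc => ?_) hSu.1)
  all_goals obtain ⟨-, -, y, hy, hyc⟩ := mem_filter.mp hc
  · exact (hSu.degF_eq_of_adj hk hy hyc).1.ge
  · exact hclosed y hy c hyc

end KMatchingCover

theorem stmt_2_general {V : Type*} [Fintype V] [DecidableEq V] (G : SimpleGraph V) [DecidableRel G.Adj]
    (k : ℕ) (hk : 2 ≤ k) :
    (∃ M : Fin k → Finset (Sym2 V),
        (∀ i, IsMatching G (M i)) ∧ ∀ v : V, ∃ i, Covers (M i) v) ↔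
      ∀ S : Finset V, IsStable G S → S.card ≤ k * (nbr G S).card := by
  refine ⟨fun ⟨M, hM, hcov⟩ S hS => KMatchingCover.card_le_mul_card_nbr hM hcov hS,
    fun hcond => ?_⟩
  obtain ⟨F, hF⟩ := KMatchingCover.exists_isMaxCover G k
  obtain ⟨F₀, hF₀, hcov₀, hstar⟩ := KMatchingCover.exists_star_cover hF.1 (hF.covers hk hcond)
  exact KMatchingCover.exists_matchings_of_star_cover (by omega) hF₀ hcov₀ hstar

theorem stmt_2 {V : Type*} [Fintype V] [DecidableEq V] (G : SimpleGraph V) [DecidableRel G.Adj]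
    (hG : G.Connected) (k : ℕ) (hk : 2 ≤ k) :
    (∃ M : Fin k → Finset (Sym2 V),
        (∀ i, IsMatching G (M i)) ∧ ∀ v : V, ∃ i, Covers (M i) v) ↔
      ∀ S : Finset V, IsStable G S → S.card ≤ k * (nbr G S).card :=
  stmt_2_general G k hk
end

section
/- Let G be a graph, k ≥ 2 an integer, and U a subset of vertices of G. There exist k matchings whose union covers every vertex of U if and only if |S| ≤ k·|N(S)| for every stable set S contained in U. -/
/-
A vertex of a stable set `S` covered by the `i`-th matching is matched into `N(S)`, and each vertex
of `N(S)` has at most one partner per matching; hence `|S| ≤ k |N(S)|`.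

Conversely, the stable-set condition gives Hall's condition `|T| ≤ k |N(T)|` for every `T ⊆ U`
(the vertices of `T` that have a neighbour in `T` lie in `N(T)` themselves), hence a map `g` sending
each `u ∈ U` to a neighbour, with fibres of size at most `k`. By induction, removing either a fibre
of leaves or a cycle of `g` (a minimal nonempty `A ⊆ g '' A`), one finds `K ⊆ U` such that the
edges `x — g x`, `x ∈ K`, still cover `U`, form a forest, and give each vertex of `K` at most one
child in `K`. As `k ≥ 2`, this forest has maximum degree at most `k`, and colouring it greedily,
leaves last, splits it into `k` matchings.
-/

open Finset

section Matching

variable {V : Type*} [DecidableEq V] {G : SimpleGraph V}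

lemma IsMatching.eq_of_mem {M : Finset (Sym2 V)} (hM : IsMatching G M)
    {v₁ v₂ w : V} (h₁ : s(v₁, w) ∈ M) (h₂ : s(v₂, w) ∈ M) : v₁ = v₂ := by
  by_contra hne
  exact hM.2 h₁ h₂ (fun h => hne (Sym2.congr_left.1 h)) w
    ⟨Sym2.mem_mk_right _ _, Sym2.mem_mk_right _ _⟩

theorem IsStable.card_le_mul_card_nbr [Fintype V] [DecidableRel G.Adj] {k : ℕ} {S : Finset V}
    (hS : IsStable G S) (M : Fin k → Finset (Sym2 V)) (hM : ∀ i, IsMatching G (M i))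
    (hcov : ∀ v ∈ S, ∃ i, Covers (M i) v) : #S ≤ k * #(nbr G S) := by
  calc #S ≤ #(univ ×ˢ nbr G S) := by
        refine card_le_card_of_forall_subsingleton (fun v p => s(v, p.2) ∈ M p.1)
          (fun v hv => ?_) fun p _ v₁ hv₁ v₂ hv₂ => IsMatching.eq_of_mem (hM p.1) hv₁.2 hv₂.2
        obtain ⟨i, e, he, hve⟩ := hcov v hv
        have hadj : G.Adj v (Sym2.Mem.other hve) := by
          rw [← G.mem_edgeSet, Sym2.other_spec hve]
          exact (hM i).1 he
        refine ⟨(i, Sym2.Mem.other hve), mem_product.2 ⟨mem_univ _, ?_⟩, ?_⟩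
        · exact mem_filter.2 ⟨mem_univ _, fun hw => hS v hv _ hw hadj, v, hv, hadj⟩
        · simpa only [Sym2.other_spec hve] using he
    _ = k * #(nbr G S) := by rw [card_product, card_univ, Fintype.card_fin]

end Matching

theorem exists_fiber_card_le_of_hall {ι α : Type*} [DecidableEq α] {k : ℕ} (t : ι → Finset α)
    (h : ∀ s : Finset ι, #s ≤ k * #(s.biUnion t)) :
    ∃ f : ι → α, (∀ i, f i ∈ t i) ∧ ∀ (s : Finset ι) (a : α), #(s.filter (f · = a)) ≤ k := by
  -- Hall's theorem for `k` copies of each element of `α`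
  obtain ⟨f, hinj, hf⟩ := (all_card_le_biUnion_card_iff_exists_injective
    fun i => t i ×ˢ (univ : Finset (Fin k))).1 fun s => by
      have : s.biUnion (fun i => t i ×ˢ (univ : Finset (Fin k))) = s.biUnion t ×ˢ univ := by
        ext; simp
      simpa [this, mul_comm] using h s
  refine ⟨fun i => (f i).1, fun i => (mem_product.1 (hf i)).1, fun s a => ?_⟩
  calc #(s.filter fun i => (f i).1 = a) ≤ #(univ : Finset (Fin k)) :=
        card_le_card_of_injOn (fun i => (f i).2) (fun _ _ => mem_univ _) fun i hi j hj hij =>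
          hinj (Prod.ext ((mem_filter.1 hi).2.trans (mem_filter.1 hj).2.symm) hij)
    _ = k := card_fin k

section Hall

variable {V : Type*} [Fintype V] [DecidableEq V] {G : SimpleGraph V} [DecidableRel G.Adj] {k : ℕ}

theorem card_le_mul_card_biUnion_neighborFinset (hk : 1 ≤ k) {U : Finset V}
    (hcond : ∀ S ⊆ U, IsStable G S → #S ≤ k * #(nbr G S)) {T : Finset V} (hTU : T ⊆ U) :
    #T ≤ k * #(T.biUnion fun v => G.neighborFinset v) := by
  set T₀ := T.filter fun t => ∀ u ∈ T, ¬G.Adj t u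
  have hT₀T : T₀ ⊆ T := filter_subset _ T
  have hstable : IsStable G T₀ := fun u hu v hv => (mem_filter.1 hu).2 v (hT₀T hv)
  have hsub : nbr G T₀ ∪ (T \ T₀) ⊆ T.biUnion fun v => G.neighborFinset v := by
    intro x hx
    rcases mem_union.1 hx with hx | hx
    · obtain ⟨-, -, u, hu, hadj⟩ := mem_filter.1 hx
      exact mem_biUnion.2 ⟨u, hT₀T hu, (G.mem_neighborFinset _ _).2 hadj⟩
    · obtain ⟨hxT, hxT₀⟩ := mem_sdiff.1 hx
      obtain ⟨u, hu, hadj⟩ : ∃ u ∈ T, G.Adj x u := by simpa [T₀, hxT] using hxT₀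
      exact mem_biUnion.2 ⟨u, hu, (G.mem_neighborFinset _ _).2 hadj.symm⟩
  have hdisj : Disjoint (nbr G T₀) (T \ T₀) := disjoint_left.2 fun x hx hx' => by
    obtain ⟨-, -, u, hu, hadj⟩ := mem_filter.1 hx
    exact (mem_filter.1 hu).2 x (mem_sdiff.1 hx').1 hadj
  calc #T = #T₀ + #(T \ T₀) := by rw [← card_sdiff_add_card_eq_card hT₀T, add_comm]
    _ ≤ k * #(nbr G T₀) + k * #(T \ T₀) :=
        add_le_add (hcond T₀ (hT₀T.trans hTU) hstable) (Nat.le_mul_of_pos_left _ hk)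
    _ = k * #(nbr G T₀ ∪ (T \ T₀)) := by rw [card_union_of_disjoint hdisj, mul_add]
    _ ≤ k * #(T.biUnion fun v => G.neighborFinset v) := Nat.mul_le_mul_left k (card_le_card hsub)

theorem exists_adj_fiber_card_le (hk : 1 ≤ k) {U : Finset V}
    (hcond : ∀ S ⊆ U, IsStable G S → #S ≤ k * #(nbr G S)) :
    ∃ g : V → V, (∀ u ∈ U, G.Adj u (g u)) ∧ ∀ w, #(U.filter (g · = w)) ≤ k := by
  obtain ⟨f, hfN, hfib⟩ := exists_fiber_card_le_of_hall (fun u : U => G.neighborFinset u)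
    fun s => by
      have := card_le_mul_card_biUnion_neighborFinset hk hcond (T := s.image Subtype.val)
        fun v hv => by obtain ⟨u, -, rfl⟩ := mem_image.1 hv; exact u.2
      rwa [card_image_of_injective _ Subtype.val_injective, image_biUnion] at this
  refine ⟨fun v => if h : v ∈ U then f ⟨v, h⟩ else v, fun u hu => ?_, fun w => ?_⟩
  · simpa [hu] using hfN ⟨u, hu⟩
  · refine (card_le_card fun v hv => ?_).trans
      ((card_image_le (f := Subtype.val)).trans (hfib univ w))
    obtain ⟨hvU, hvw⟩ := mem_filter.1 hv
    exact mem_image.2 ⟨⟨v, hvU⟩, mem_filter.2 ⟨mem_univ _, by simpa [hvU] using hvw⟩, rfl⟩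

end Hall

section FunctionalGraph

variable {V : Type*} [DecidableEq V] {g : V → V} {K U : Finset V}

-- A nonempty `S ⊆ g '' S` contains a cycle of `g`, so this says that the edges `x — g x`, `x ∈ K`,
-- form a forest.
def AcyclicOn (g : V → V) (K : Finset V) : Prop :=
  ∀ S ⊆ K, S ⊆ S.image g → S = ∅

lemma AcyclicOn.mono {L : Finset V} (h : AcyclicOn g K) (hLK : L ⊆ K) : AcyclicOn g L :=
  fun S hS => h S (hS.trans hLK)

lemma AcyclicOn.exists_leaf (h : AcyclicOn g K) (hK : K.Nonempty) :
    ∃ x ∈ K, ∀ y ∈ K, g y ≠ x := by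
  by_contra! hleaf
  refine hK.ne_empty (h K subset_rfl fun x hx => ?_)
  obtain ⟨y, hy, rfl⟩ := hleaf x hx
  exact mem_image_of_mem g hy

theorem AcyclicOn.exists_coloring {k : ℕ} (hk : 0 < k) (hK : AcyclicOn g K)
    (hdeg : ∀ w, #(K.filter fun x => w ∈ s(x, g x)) ≤ k) :
    ∃ c : V → Fin k, ∀ x ∈ K, ∀ y ∈ K, x ≠ y → c x = c y →
      ∀ v, ¬(v ∈ s(x, g x) ∧ v ∈ s(y, g y)) := by
  induction K using Finset.strongInduction with
  | H K ih =>
  rcases K.eq_empty_or_nonempty with rfl | hne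
  · exact ⟨fun _ => ⟨0, hk⟩, by simp⟩
  obtain ⟨x, hxK, hleaf⟩ := hK.exists_leaf hne
  obtain ⟨c, hc⟩ := ih (K.erase x) (erase_ssubset hxK) (hK.mono (erase_subset x K))
    fun w => (card_le_card (filter_subset_filter _ (erase_subset x K))).trans (hdeg w)
  -- the edges of `K.erase x` meeting the edge `x — g x` all contain `g x`, since `x` is a leaf
  set rivals := (K.erase x).filter fun y => g x ∈ s(y, g y)
  have hrivals : #(rivals.image c) < k := by
    have : #rivals + 1 ≤ k := by
      simp only [rivals, filter_erase]
      rw [card_erase_add_one (mem_filter.2 ⟨hxK, Sym2.mem_mk_right x (g x)⟩)]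
      exact hdeg (g x)
    exact (card_image_le).trans_lt (by omega)
  obtain ⟨γ, -, hγ⟩ := exists_mem_notMem_of_card_lt_card
    (hrivals.trans_eq (card_fin k).symm : #(rivals.image c) < #(univ : Finset (Fin k)))
  have hsep : ∀ y ∈ K.erase x, ∀ v, v ∈ s(x, g x) → v ∈ s(y, g y) → c y ≠ γ := by
    intro y hy v hvx hvy hcy
    obtain ⟨hyx, hyK⟩ := mem_erase.1 hy
    rcases Sym2.mem_iff.1 hvx with rfl | rfl
    · rcases Sym2.mem_iff.1 hvy with rfl | h
      · exact hyx rfl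
      · exact hleaf y hyK h.symm
    · exact hγ (mem_image.2 ⟨y, mem_filter.2 ⟨hy, hvy⟩, hcy⟩)
  refine ⟨Function.update c x γ, fun y hy z hz hyz hcol v hv => ?_⟩
  by_cases hyx : y = x
  · subst hyx
    have hz' : z ∈ K.erase y := mem_erase.2 ⟨Ne.symm hyz, hz⟩
    rw [Function.update_self, Function.update_of_ne (Ne.symm hyz)] at hcol
    exact hsep z hz' v hv.1 hv.2 hcol.symm
  by_cases hzx : z = x
  · subst hzx
    rw [Function.update_self, Function.update_of_ne hyx] at hcol
    exact hsep y (mem_erase.2 ⟨hyx, hy⟩) v hv.2 hv.1 hcol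
  rw [Function.update_of_ne hyx, Function.update_of_ne hzx] at hcol
  exact hc y (mem_erase.2 ⟨hyx, hy⟩) z (mem_erase.2 ⟨hzx, hz⟩) hyz hcol v hv

-- Each vertex of `K` has at most one child in `K`, so every component of the edges `x — g x`,
-- `x ∈ K`, is a spider: paths hanging from a centre outside `K`.
structure IsSpiderCover (g : V → V) (U K : Finset V) : Prop where
  subset : K ⊆ U
  cover : U ⊆ K ∪ K.image g
  eq_of_map_eq_mem : ∀ x ∈ K, ∀ y ∈ K, g x = g y → g x ∈ K → x = y
  acyclicOn : AcyclicOn g K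

lemma IsSpiderCover.card_filter_mem_le {k : ℕ} (hk : 2 ≤ k) (hK : IsSpiderCover g U K)
    (hfib : ∀ w, #(U.filter (g · = w)) ≤ k) (w : V) :
    #(K.filter fun x => w ∈ s(x, g x)) ≤ k := by
  have hsplit : K.filter (fun x => w ∈ s(x, g x)) = K.filter (· = w) ∪ K.filter (g · = w) := by
    ext x; simp [Sym2.mem_iff, eq_comm, and_or_left]
  rw [hsplit]
  by_cases hw : w ∈ K
  · have hself : #(K.filter (· = w)) ≤ 1 := card_le_one.2 fun a ha b hb => by
      rw [(mem_filter.1 ha).2, (mem_filter.1 hb).2]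
    have hchild : #(K.filter (g · = w)) ≤ 1 := card_le_one.2 fun a ha b hb => by
      obtain ⟨haK, rfl⟩ := mem_filter.1 ha
      obtain ⟨hbK, hab⟩ := mem_filter.1 hb
      exact hK.eq_of_map_eq_mem a haK b hbK hab.symm hw
    exact (card_union_le _ _).trans (by omega)
  · rw [filter_false_of_mem fun x hx (hxw : x = w) => hw (hxw ▸ hx), empty_union]
    exact (card_le_card (filter_subset_filter _ hK.subset)).trans (hfib w)

lemma AcyclicOn.exists_terminal_fiber (hU : AcyclicOn g U) (hne : U.Nonempty) :
    ∃ v, (U.filter (g · = v)).Nonempty ∧ ∀ y ∈ U, g y ∉ U.filter (g · = v) := by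
  set P := U.filter fun x => ∃ y ∈ U, g y = x
  have hP : ∀ y ∈ U, g y ∈ U → g y ∈ P := fun y hy hgy => mem_filter.2 ⟨hgy, y, hy, rfl⟩
  rcases P.eq_empty_or_nonempty with hPe | hPne
  · obtain ⟨u, hu⟩ := hne
    refine ⟨g u, ⟨u, mem_filter.2 ⟨hu, rfl⟩⟩, fun y hy hgy => ?_⟩
    exact (eq_empty_iff_forall_notMem.1 hPe) _ (hP y hy (mem_filter.1 hgy).1)
  · obtain ⟨p, hpP, hleaf⟩ := (hU.mono (filter_subset _ U)).exists_leaf hPne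
    obtain ⟨-, x, hxU, hxp⟩ := mem_filter.1 hpP
    refine ⟨p, ⟨x, mem_filter.2 ⟨hxU, hxp⟩⟩, fun y hy hgy => ?_⟩
    obtain ⟨hgyU, hggy⟩ := mem_filter.1 hgy
    exact hleaf (g y) (hP y hy hgyU) hggy

lemma IsSpiderCover.union_fiber {v : V} (hv : (U.filter (g · = v)).Nonempty)
    (hleaf : ∀ y ∈ U, g y ∉ U.filter (g · = v))
    (hK : IsSpiderCover g (U \ insert v (U.filter (g · = v))) K) :
    IsSpiderCover g U (K ∪ U.filter (g · = v)) := by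
  set F := U.filter (g · = v)
  have hsub : K ∪ F ⊆ U := union_subset (hK.subset.trans sdiff_subset) (filter_subset _ U)
  have hKv : ∀ x ∈ K, x ≠ v := fun x hx h =>
    (mem_sdiff.1 (hK.subset hx)).2 (h ▸ mem_insert_self v F)
  refine ⟨hsub, fun u hu => ?_, fun x hx y hy hxy hgx => ?_, fun S hS hSimg => ?_⟩
  · by_cases huvF : u ∈ insert v F
    · rcases mem_insert.1 huvF with rfl | huF
      · obtain ⟨x, hxF⟩ := hv
        exact mem_union_right _ (mem_image.2 ⟨x, mem_union_right _ hxF, (mem_filter.1 hxF).2⟩)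
      · exact mem_union_left _ (mem_union_right _ huF)
    · exact union_subset_union subset_union_left (image_subset_image subset_union_left)
        (hK.cover (mem_sdiff.2 ⟨hu, huvF⟩))
  · have hgxK : g x ∈ K := (mem_union.1 hgx).resolve_right (hleaf x (hsub hx))
    have hmemK : ∀ z ∈ K ∪ F, g z = g x → z ∈ K := fun z hz hgz =>
      (mem_union.1 hz).resolve_right fun hzF => hKv _ hgxK (hgz ▸ (mem_filter.1 hzF).2)
    exact hK.eq_of_map_eq_mem x (hmemK x hx rfl) y (hmemK y hy hxy.symm) hxy hgxK
  · refine hK.acyclicOn S (fun s hs => ?_) hSimg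
    obtain ⟨t, ht, rfl⟩ := mem_image.1 (hSimg hs)
    exact (mem_union.1 (hS hs)).resolve_right (hleaf t (hsub (hS ht)))

lemma AcyclicOn.union_of_minimal {A C : Finset V} (hK : AcyclicOn g K)
    (hA : Minimal (fun T : Finset V => T.Nonempty ∧ T ⊆ T.image g) A) (hCA : C ⊆ A)
    (hAC : ¬A ⊆ C) (hKC : ∀ z ∈ K, g z ∉ C) : AcyclicOn g (K ∪ C) := by
  intro S hS hSimg
  -- the part of `S` in `C` would be a nonempty `T ⊆ g '' T` strictly inside `A`
  set T := S.filter (· ∈ C)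
  have hT : T ⊆ T.image g := fun t ht => by
    obtain ⟨htS, htC⟩ := mem_filter.1 ht
    obtain ⟨s, hs, rfl⟩ := mem_image.1 (hSimg htS)
    have hsC : s ∈ C := (mem_union.1 (hS hs)).resolve_left fun hsK => hKC s hsK htC
    exact mem_image_of_mem g (mem_filter.2 ⟨hs, hsC⟩)
  have hTe : T = ∅ := by
    by_contra hne
    exact hAC ((hA.2 ⟨nonempty_iff_ne_empty.2 hne, hT⟩ fun t ht => hCA (mem_filter.1 ht).2).trans
      fun t ht => (mem_filter.1 ht).2)
  refine hK S (fun s hs => ?_) hSimg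
  exact (mem_union.1 (hS hs)).resolve_right fun hsC =>
    (eq_empty_iff_forall_notMem.1 hTe) s (mem_filter.2 ⟨hs, hsC⟩)

lemma IsSpiderCover.union_cycle {A : Finset V} (hg : ∀ a ∈ A, g a ≠ a) (hAU : A ⊆ U)
    (hA : Minimal (fun T : Finset V => T.Nonempty ∧ T ⊆ T.image g) A)
    (hK : IsSpiderCover g (U \ A) K) : ∃ L, IsSpiderCover g U L := by
  obtain ⟨hAne, hAsub⟩ := hA.1
  have himg : A.image g = A := (eq_of_subset_of_card_le hAsub card_image_le).symm
  have hinj : Set.InjOn g A := card_image_iff.1 (congrArg card himg)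
  have hKA : ∀ y ∈ K, y ∉ A := fun y hy => (mem_sdiff.1 (hK.subset hy)).2
  -- `d` leaves the cycle; if no vertex of `A` has a child in `K`, its predecessor covers it
  obtain ⟨d, hdA, hd⟩ : ∃ d ∈ A, (∃ a ∈ A, ∃ y ∈ K, g y = a) → ∃ y ∈ K, g y = d := by
    by_cases h : ∃ a ∈ A, ∃ y ∈ K, g y = a
    · obtain ⟨a, ha, hy⟩ := h
      exact ⟨a, ha, fun _ => hy⟩
    · obtain ⟨a, ha⟩ := hAne
      exact ⟨a, ha, fun h' => absurd h' h⟩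
  set C := A.filter fun a => a ≠ d ∧ ∀ y ∈ K, g y ≠ a
  have hCA : C ⊆ A := filter_subset _ A
  have hgC : ∀ z ∈ C, g z ∉ K := fun z hz hgz =>
    hKA _ hgz (himg ▸ mem_image_of_mem g (hCA hz))
  have hgK : ∀ z ∈ K, g z ∉ C := fun z hz hgz => (mem_filter.1 hgz).2.2 z hz rfl
  refine ⟨K ∪ C, union_subset (hK.subset.trans sdiff_subset) (hCA.trans hAU),
    fun u hu => ?_, fun x hx y hy hxy hgx => ?_,
    hK.acyclicOn.union_of_minimal hA hCA (fun h => (mem_filter.1 (h hdA)).2.1 rfl) hgK⟩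
  · have hmono : K ∪ K.image g ⊆ (K ∪ C) ∪ (K ∪ C).image g :=
      union_subset_union subset_union_left (image_subset_image subset_union_left)
    by_cases huA : u ∈ A
    · by_cases hchild : ∃ y ∈ K, g y = u
      · obtain ⟨y, hy, rfl⟩ := hchild
        exact hmono (mem_union_right _ (mem_image_of_mem g hy))
      by_cases hud : u = d
      · subst hud
        obtain ⟨a, haA, rfl⟩ := mem_image.1 (hAsub huA)
        have haC : a ∈ C := mem_filter.2 ⟨haA, fun h => hg a haA (h ▸ rfl),
          fun y hy hya => hchild (hd ⟨a, haA, y, hy, hya⟩)⟩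
        exact mem_union_right _ (mem_image_of_mem g (mem_union_right _ haC))
      · have huC : u ∈ C := mem_filter.2 ⟨huA, hud, fun y hy h => hchild ⟨y, hy, h⟩⟩
        exact mem_union_left _ (mem_union_right _ huC)
    · exact hmono (hK.cover (mem_sdiff.2 ⟨hu, huA⟩))
  · by_cases hgxK : g x ∈ K
    · have hmemK : ∀ z ∈ K ∪ C, g z = g x → z ∈ K := fun z hz hgz =>
        (mem_union.1 hz).resolve_right fun hzC => hgC z hzC (hgz ▸ hgxK)
      exact hK.eq_of_map_eq_mem x (hmemK x hx rfl) y (hmemK y hy hxy.symm) hxy hgxK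
    · have hgxC : g x ∈ C := (mem_union.1 hgx).resolve_left hgxK
      have hmemC : ∀ z ∈ K ∪ C, g z = g x → z ∈ C := fun z hz hgz =>
        (mem_union.1 hz).resolve_left fun hzK => hgK z hzK (hgz ▸ hgxC)
      exact hinj (hCA (hmemC x hx rfl)) (hCA (hmemC y hy hxy.symm)) hxy

theorem exists_isSpiderCover (g : V → V) (U : Finset V) (hg : ∀ u ∈ U, g u ≠ u) :
    ∃ K, IsSpiderCover g U K := by
  induction U using Finset.strongInduction with
  | H U ih =>
  by_cases hU : AcyclicOn g U
  · rcases U.eq_empty_or_nonempty with rfl | hne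
    · exact ⟨∅, empty_subset _, by simp, by simp, hU⟩
    obtain ⟨v, hv, hleaf⟩ := hU.exists_terminal_fiber hne
    have hssub : U \ insert v (U.filter (g · = v)) ⊂ U := by
      obtain ⟨x, hx⟩ := hv
      exact (ssubset_iff_of_subset sdiff_subset).2
        ⟨x, (mem_filter.1 hx).1, fun h => (mem_sdiff.1 h).2 (mem_insert_of_mem hx)⟩
    obtain ⟨K, hK⟩ := ih _ hssub fun u hu => hg u (sdiff_subset hu)
    exact ⟨_, hK.union_fiber hv hleaf⟩
  · obtain ⟨S, hSU, hS, hSne⟩ : ∃ S ⊆ U, S ⊆ S.image g ∧ S ≠ ∅ := by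
      simpa [AcyclicOn] using hU
    obtain ⟨A, hAS, hA⟩ := exists_minimal_le_of_wellFoundedLT
      (fun T : Finset V => T.Nonempty ∧ T ⊆ T.image g) S ⟨nonempty_iff_ne_empty.2 hSne, hS⟩
    have hAU : A ⊆ U := hAS.trans hSU
    obtain ⟨K, hK⟩ := ih (U \ A) (sdiff_ssubset hAU hA.1.1) fun u hu => hg u (sdiff_subset hu)
    exact hK.union_cycle (fun a ha => hg a (hAU ha)) hAU hA

theorem exists_matchings_of_fiber_card_le {G : SimpleGraph V} {k : ℕ} (hk : 2 ≤ k)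
    (hadj : ∀ u ∈ U, G.Adj u (g u)) (hfib : ∀ w, #(U.filter (g · = w)) ≤ k) :
    ∃ M : Fin k → Finset (Sym2 V), (∀ i, IsMatching G (M i)) ∧ ∀ v ∈ U, ∃ i, Covers (M i) v := by
  obtain ⟨K, hK⟩ := exists_isSpiderCover g U fun u hu => (hadj u hu).ne'
  obtain ⟨c, hc⟩ := hK.acyclicOn.exists_coloring (by omega) (hK.card_filter_mem_le hk hfib)
  refine ⟨fun i => (K.filter (c · = i)).image fun x => s(x, g x),
    fun i => ⟨fun e he => ?_, fun e he f hf hef => ?_⟩, fun v hv => ?_⟩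
  · obtain ⟨x, hx, rfl⟩ := mem_image.1 he
    exact hadj x (hK.subset (mem_filter.1 hx).1)
  · obtain ⟨x, hx, rfl⟩ := mem_image.1 he
    obtain ⟨y, hy, rfl⟩ := mem_image.1 hf
    exact hc x (mem_filter.1 hx).1 y (mem_filter.1 hy).1 (fun h => hef (h ▸ rfl))
      ((mem_filter.1 hx).2.trans (mem_filter.1 hy).2.symm)
  · rcases mem_union.1 (hK.cover hv) with hvK | hvg
    · exact ⟨c v, _, mem_image_of_mem _ (mem_filter.2 ⟨hvK, rfl⟩), Sym2.mem_mk_left _ _⟩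
    · obtain ⟨x, hx, rfl⟩ := mem_image.1 hvg
      exact ⟨c x, _, mem_image_of_mem _ (mem_filter.2 ⟨hx, rfl⟩), Sym2.mem_mk_right _ _⟩

end FunctionalGraph

theorem stmt_3 {V : Type*} [Fintype V] [DecidableEq V] (G : SimpleGraph V) [DecidableRel G.Adj]
    (k : ℕ) (hk : 2 ≤ k) (U : Finset V) :
    (∃ M : Fin k → Finset (Sym2 V),
        (∀ i, IsMatching G (M i)) ∧ ∀ v ∈ U, ∃ i, Covers (M i) v) ↔
      ∀ S : Finset V, S ⊆ U → IsStable G S → S.card ≤ k * (nbr G S).card := by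
  refine ⟨fun ⟨M, hM, hcov⟩ S hSU hS => hS.card_le_mul_card_nbr M hM fun v hv => hcov v (hSU hv),
    fun hcond => ?_⟩
  obtain ⟨g, hadj, hfib⟩ := exists_adj_fiber_card_le (by omega) hcond
  exact exists_matchings_of_fiber_card_le hk hadj hfib
end

section
/- Let G be a graph and k ≥ 2. The maximum number of vertices of G that can be covered by a union of k matchings equals |V(G)| − max{|S| − k·|N(S)| : S is a stable set of G}. -/
/-
A union of `k` matchings meets a stable set `S` in at most `k·|N(S)|` vertices, since every
covered vertex of `S` is matched into `N(S)`; this gives the upper bound.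

For the lower bound, let `D` be the maximum defect. Taking for `S` the vertices of `A` with no
neighbour in `A` shows `|A| ≤ k·|N(A)| + D` for every vertex set `A`, so Hall's theorem with
deficiency `D`, applied to `k` copies of each neighbourhood, yields a set `W` of at least
`|V| - D` vertices and a choice `v ↦ f v` of a neighbour for each `v ∈ W` such that no vertex is
chosen more than `k` times. The arrows `v → f v` are then coloured with `k` colours so that
arrows of the same colour are vertex-disjoint and every vertex of `W` lies on a coloured arrow:
remove an arrow `u → f u` together with its two endpoints, colour the rest by induction and
give `u → f u` a colour unused by the remaining arrows at `u` and `f u`. If no arrow enters `u`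
there are at most `k - 1` of them; if every vertex of `W` has an arrow into it, `f` permutes `W`
and only the arrow into `u` remains, which is where `k ≥ 2` is needed. Each colour class is then
a matching.
-/

open Finset

section UpperBound

variable {V : Type*} [Fintype V] [DecidableEq V] (G : SimpleGraph V) [DecidableRel G.Adj]

theorem card_filter_covers_le_card_nbr {M : Finset (Sym2 V)} (hM : IsMatching G M)
    {S : Finset V} (hS : IsStable G S) : #{v ∈ S | Covers M v} ≤ #(nbr G S) := by
  refine card_le_card_of_forall_subsingleton (fun v w => s(v, w) ∈ M) ?_ ?_
  · rintro v hv
    obtain ⟨hvS, e, he, hve⟩ := mem_filter.mp hv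
    obtain ⟨w, rfl⟩ := Sym2.mem_iff_exists.mp hve
    have hvw : G.Adj v w := hM.1 he
    refine ⟨w, ?_, he⟩
    simp only [nbr, mem_filter, mem_univ, true_and]
    exact ⟨fun hwS => hS v hvS w hwS hvw, v, hvS, hvw⟩
  · rintro w - v ⟨-, hv⟩ v' ⟨-, hv'⟩
    by_contra hne
    have hedge : s(v, w) ≠ s(v', w) := fun h => hne (Sym2.congr_left.mp h)
    exact hM.2 hv hv' hedge w ⟨Sym2.mem_mk_right v w, Sym2.mem_mk_right v' w⟩

theorem card_covered_add_defect_le {k : ℕ} (M : Fin k → Finset (Sym2 V))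
    (hM : ∀ i, IsMatching G (M i)) {S : Finset V} (hS : IsStable G S) :
    #{v | ∃ i, Covers (M i) v} + (#S - k * #(nbr G S)) ≤ Fintype.card V := by
  have hS_covered : #{v ∈ S | ∃ i, Covers (M i) v} ≤ k * #(nbr G S) := by
    have hunion :
        {v ∈ S | ∃ i, Covers (M i) v} = univ.biUnion fun i => {v ∈ S | Covers (M i) v} := by
      ext v; simp
    calc #{v ∈ S | ∃ i, Covers (M i) v}
        ≤ ∑ i, #{v ∈ S | Covers (M i) v} := hunion ▸ card_biUnion_le
      _ ≤ ∑ _i : Fin k, #(nbr G S) :=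
        sum_le_sum fun i _ => card_filter_covers_le_card_nbr G (hM i) hS
      _ = k * #(nbr G S) := by simp
  have hsplit :
      ({v | ∃ i, Covers (M i) v} : Finset V) ⊆ {v ∈ S | ∃ i, Covers (M i) v} ∪ Sᶜ := by
    intro v hv
    by_cases hvS : v ∈ S
    · exact mem_union_left _ (mem_filter.mpr ⟨hvS, (mem_filter.mp hv).2⟩)
    · exact mem_union_right _ (mem_compl.mpr hvS)
  have hcard := (card_le_card hsplit).trans (card_union_le _ _)
  rw [card_compl] at hcard
  have := card_le_univ S
  have := card_le_univ ({v | ∃ i, Covers (M i) v} : Finset V)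
  omega

end UpperBound

theorem Finset.exists_injective_of_card_le_card_biUnion_add {ι α : Type*} [Fintype ι]
    [DecidableEq ι] [DecidableEq α] (t : ι → Finset α) (D : ℕ)
    (h : ∀ s : Finset ι, #s ≤ #(s.biUnion t) + D) :
    ∃ W : Finset ι, Fintype.card ι ≤ #W + D ∧
      ∃ F : W → α, Function.Injective F ∧ ∀ i : W, F i ∈ t i := by
  -- `D` dummy elements, available to every index, absorb the deficiency
  let t' i := (t i).disjSum (univ : Finset (Fin D))
  obtain ⟨F', hF'inj, hF'mem⟩ := (all_card_le_biUnion_card_iff_exists_injective t').mp <| by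
    intro s
    rcases s.eq_empty_or_nonempty with rfl | ⟨i₀, hi₀⟩
    · simp
    calc #s ≤ #((s.biUnion t).disjSum (univ : Finset (Fin D))) := by simpa using h s
      _ ≤ #(s.biUnion t') := card_le_card <| by
        rintro (a | d) hx
        · obtain ⟨i, hi, ha⟩ := mem_biUnion.mp (inl_mem_disjSum.mp hx)
          exact mem_biUnion.mpr ⟨i, hi, inl_mem_disjSum.mpr ha⟩
        · exact mem_biUnion.mpr ⟨i₀, hi₀, inr_mem_disjSum.mpr (mem_univ d)⟩
  let W : Finset ι := {i | (F' i).isLeft}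
  have hleft (i : W) : (F' i).isLeft := (mem_filter.mp i.2).2
  refine ⟨W, ?_, fun i => (F' i).getLeft (hleft i), fun i j hij => ?_, fun i => ?_⟩
  · have hcompl : #Wᶜ ≤ #((univ : Finset (Fin D)).map (.inr : Fin D ↪ α ⊕ Fin D)) := by
      refine card_le_card_of_injOn F' (fun i hi => ?_) hF'inj.injOn
      have hright : (F' i).isRight := by simpa [W] using hi
      obtain ⟨d, hd⟩ := Sum.isRight_iff.mp hright
      simp [hd]
    rw [card_map, card_univ, Fintype.card_fin] at hcompl
    have := card_add_card_compl W
    omega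
  · apply Subtype.ext
    apply hF'inj
    rw [← Sum.inl_getLeft (F' i) (hleft i), ← Sum.inl_getLeft (F' j) (hleft j)]
    exact congrArg Sum.inl hij
  · have := hF'mem i
    rwa [← Sum.inl_getLeft (F' i) (hleft i), inl_mem_disjSum] at this

section LowerBound

variable {V : Type*} [Fintype V] [DecidableEq V] (G : SimpleGraph V) [DecidableRel G.Adj]
  {k : ℕ} {D : ℕ}

theorem card_le_mul_card_biUnion_neighborFinset_add (hk : 1 ≤ k)
    (hD : ∀ S : Finset V, IsStable G S → #S - k * #(nbr G S) ≤ D) (A : Finset V) :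
    #A ≤ k * #(A.biUnion fun v => G.neighborFinset v) + D := by
  let S : Finset V := {v ∈ A | ∀ u ∈ A, ¬ G.Adj v u}
  have hSA : S ⊆ A := filter_subset _ _
  have hS : IsStable G S := fun u hu v hv => (mem_filter.mp hu).2 v (hSA hv)
  have hdisj : Disjoint (nbr G S) (A \ S) := by
    refine disjoint_left.mpr fun w hw hwA => ?_
    obtain ⟨-, u, huS, huw⟩ := (mem_filter.mp hw).2
    exact (mem_filter.mp huS).2 w (mem_sdiff.mp hwA).1 huw
  have hsub : nbr G S ∪ (A \ S) ⊆ A.biUnion fun v => G.neighborFinset v := by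
    intro w hw
    simp only [mem_biUnion, SimpleGraph.mem_neighborFinset]
    rcases mem_union.mp hw with hw | hw
    · obtain ⟨-, u, huS, huw⟩ := (mem_filter.mp hw).2
      exact ⟨u, hSA huS, huw⟩
    · obtain ⟨hwA, hwS⟩ := mem_sdiff.mp hw
      simp only [S, mem_filter, hwA, true_and, not_forall, not_not] at hwS
      obtain ⟨u, huA, hwu⟩ := hwS
      exact ⟨u, huA, hwu.symm⟩
  have hN := card_union_of_disjoint hdisj ▸ card_le_card hsub
  have hA := card_sdiff_add_card_eq_card hSA
  have hdefect := hD S hS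
  have hk' : #(A \ S) ≤ k * #(A \ S) := Nat.le_mul_of_pos_left _ hk
  have hkN := Nat.mul_le_mul_left k hN
  rw [mul_add] at hkN
  omega

theorem exists_neighbor_choice (hk : 1 ≤ k)
    (hD : ∀ S : Finset V, IsStable G S → #S - k * #(nbr G S) ≤ D) :
    ∃ W : Finset V, ∃ f : V → V, Fintype.card V ≤ #W + D ∧
      (∀ v ∈ W, G.Adj v (f v)) ∧ ∀ c, #{v ∈ W | f v = c} ≤ k := by
  have hHall (A : Finset V) :
      #A ≤ #(A.biUnion fun v => G.neighborFinset v ×ˢ (univ : Finset (Fin k))) + D := by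
    have hprod : (A.biUnion fun v => G.neighborFinset v ×ˢ (univ : Finset (Fin k))) =
        (A.biUnion fun v => G.neighborFinset v) ×ˢ univ := by
      ext; simp
    rw [hprod, card_product, card_univ, Fintype.card_fin, mul_comm]
    exact card_le_mul_card_biUnion_neighborFinset_add G hk hD A
  obtain ⟨W, hW, F, hFinj, hFmem⟩ := exists_injective_of_card_le_card_biUnion_add _ D hHall
  let f v := if h : v ∈ W then (F ⟨v, h⟩).1 else v
  have hf (v : W) : f v = (F v).1 := dif_pos v.2
  refine ⟨W, f, hW, fun v hv => ?_, fun c => ?_⟩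
  · rw [hf ⟨v, hv⟩, ← SimpleGraph.mem_neighborFinset]
    exact (mem_product.mp (hFmem ⟨v, hv⟩)).1
  · calc #{v ∈ W | f v = c}
        ≤ #(univ : Finset (Fin k)) := by
          refine card_le_card_of_forall_subsingleton
            (fun v i => ∃ h : v ∈ W, F ⟨v, h⟩ = (c, i)) (fun v hv => ?_) ?_
          · obtain ⟨hvW, hfv⟩ := mem_filter.mp hv
            exact ⟨(F ⟨v, hvW⟩).2, mem_univ _, hvW, Prod.ext (hf ⟨v, hvW⟩ ▸ hfv) rfl⟩
          · rintro i - v ⟨-, hv, hFv⟩ v' ⟨-, hv', hFv'⟩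
            exact congrArg Subtype.val (hFinj (hFv.trans hFv'.symm))
      _ = k := by simp

end LowerBound

section ArrowColoring

variable {V : Type*} [DecidableEq V] {k : ℕ}

def IsArrowColoring (f : V → V) (L : Finset V) (col : V → Fin k) : Prop :=
  ∀ y ∈ L, ∀ y' ∈ L, y ≠ y' → col y = col y' →
    ∀ v, ¬(v ∈ s(y, f y) ∧ v ∈ s(y', f y'))

theorem exists_matchings_of_isArrowColoring (G : SimpleGraph V) {f : V → V} {L : Finset V}
    {col : V → Fin k} (hadj : ∀ y ∈ L, G.Adj y (f y)) (hcol : IsArrowColoring f L col) :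
    ∃ M : Fin k → Finset (Sym2 V), (∀ i, IsMatching G (M i)) ∧
      ∀ v, (v ∈ L ∨ ∃ y ∈ L, f y = v) → ∃ i, Covers (M i) v := by
  refine ⟨fun i => {y ∈ L | col y = i}.image fun y => s(y, f y), fun i => ⟨?_, ?_⟩, ?_⟩
  · rintro _ he
    obtain ⟨y, hy, rfl⟩ := mem_image.mp he
    exact hadj y (mem_filter.mp hy).1
  · rintro _ he _ he' hne
    obtain ⟨y, hy, rfl⟩ := mem_image.mp he
    obtain ⟨y', hy', rfl⟩ := mem_image.mp he'
    obtain ⟨hyL, rfl⟩ := mem_filter.mp hy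
    obtain ⟨hy'L, hcol'⟩ := mem_filter.mp hy'
    exact hcol y hyL y' hy'L (by rintro rfl; exact hne rfl) hcol'.symm
  · rintro v (hv | ⟨y, hy, rfl⟩)
    · exact ⟨col v, _, mem_image_of_mem _ (mem_filter.mpr ⟨hv, rfl⟩), Sym2.mem_mk_left _ _⟩
    · exact ⟨col y, _, mem_image_of_mem _ (mem_filter.mpr ⟨hy, rfl⟩),
        Sym2.mem_mk_right _ _⟩

theorem IsArrowColoring.insert {f : V → V} {L : Finset V} {col : V → Fin k}
    (hcol : IsArrowColoring f L col) {u : V} (hu : u ∉ L) {i : Fin k}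
    (hi : ∀ y ∈ L, col y = i → ∀ v, ¬(v ∈ s(u, f u) ∧ v ∈ s(y, f y))) :
    IsArrowColoring f (insert u L) (Function.update col u i) := by
  have hcol_of_mem {y} (hy : y ∈ L) : Function.update col u i y = col y :=
    Function.update_of_ne (ne_of_mem_of_not_mem hy hu) _ _
  intro y hy y' hy' hne hcol_eq
  rcases mem_insert.mp hy with rfl | hyL <;> rcases mem_insert.mp hy' with rfl | hy'L
  · exact absurd rfl hne
  · rw [Function.update_self, hcol_of_mem hy'L] at hcol_eq
    exact hi y' hy'L hcol_eq.symm
  · rw [Function.update_self, hcol_of_mem hyL] at hcol_eq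
    exact fun v hv => hi y hyL hcol_eq v hv.symm
  · rw [hcol_of_mem hyL, hcol_of_mem hy'L] at hcol_eq
    exact hcol y hyL y' hy'L hne hcol_eq

theorem exists_mem_card_fiber_erase_add_lt (hk : 2 ≤ k) (f : V → V) {W : Finset V}
    (hW : W.Nonempty) (hfib : ∀ c, #{x ∈ W | f x = c} ≤ k) :
    ∃ u ∈ W, #({x ∈ W | f x = u}.erase (f u)) + #({x ∈ W | f x = f u}.erase u) < k := by
  by_cases hsource : ∃ u ∈ W, ∀ x ∈ W, f x ≠ u
  · obtain ⟨u, huW, hu⟩ := hsource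
    have hempty : {x ∈ W | f x = u} = ∅ := filter_eq_empty_iff.mpr hu
    have hmem : u ∈ {x ∈ W | f x = f u} := mem_filter.mpr ⟨huW, rfl⟩
    refine ⟨u, huW, ?_⟩
    rw [hempty, erase_empty, card_empty, card_erase_of_mem hmem]
    have := hfib (f u)
    omega
  -- otherwise `W ⊆ f '' W`, so `f` is injective on `W`
  push Not at hsource
  have hinj : Set.InjOn f W := by
    refine card_image_iff.mp (le_antisymm card_image_le (card_le_card fun u hu => ?_))
    obtain ⟨x, hx, rfl⟩ := hsource u hu
    exact mem_image_of_mem f hx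
  have hfiber_le_one (c : V) : #{x ∈ W | f x = c} ≤ 1 :=
    card_le_one.mpr fun x hx y hy =>
      hinj (mem_filter.mp hx).1 (mem_filter.mp hy).1
        ((mem_filter.mp hx).2.trans (mem_filter.mp hy).2.symm)
  obtain ⟨u, huW⟩ := hW
  refine ⟨u, huW, ?_⟩
  have hfiber_fu : {x ∈ W | f x = f u}.erase u = ∅ := by
    refine eq_empty_of_forall_notMem fun x hx => ?_
    obtain ⟨hxu, hx⟩ := mem_erase.mp hx
    exact hxu (hinj (mem_filter.mp hx).1 huW (mem_filter.mp hx).2)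
  rw [hfiber_fu, card_empty]
  have := (card_erase_le (a := f u)).trans (hfiber_le_one u)
  omega

theorem exists_isArrowColoring (hk : 2 ≤ k) (f : V → V) (W : Finset V)
    (hfib : ∀ c, #{x ∈ W | f x = c} ≤ k) :
    ∃ L ⊆ W, ∃ col : V → Fin k, IsArrowColoring f L col ∧
      ∀ w ∈ W, w ∈ L ∨ ∃ y ∈ L, f y = w := by
  induction W using Finset.strongInduction with
  | H W ih =>
  rcases W.eq_empty_or_nonempty with rfl | hW
  · exact ⟨∅, empty_subset _, fun _ => ⟨0, by omega⟩, by simp [IsArrowColoring], by simp⟩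
  obtain ⟨u, huW, hu⟩ := exists_mem_card_fiber_erase_add_lt hk f hW hfib
  set c := f u
  set W' := (W.erase u).erase c
  have hW'W : W' ⊆ W := (erase_subset _ _).trans (erase_subset _ _)
  have hW' {y} (hy : y ∈ W') : y ≠ u ∧ y ≠ c ∧ y ∈ W := by
    obtain ⟨hyc, hy⟩ := mem_erase.mp hy
    exact ⟨(mem_erase.mp hy).1, hyc, (mem_erase.mp hy).2⟩
  obtain ⟨L', hL'W', col', hcol', hcov'⟩ :=
    ih W' (ssubset_of_subset_of_ne hW'W fun h => (hW' (h ▸ huW)).1 rfl)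
      fun c => (card_le_card (filter_subset_filter _ hW'W)).trans (hfib c)
  -- a colour not used by any arrow of `L'` that meets `u` or `c`
  let T := {y ∈ L' | f y = u ∨ f y = c}
  have hT : #T < k := by
    refine lt_of_le_of_lt (card_le_card fun y hy => ?_) ((card_union_le _ _).trans_lt hu)
    obtain ⟨hyL', hfy⟩ := mem_filter.mp hy
    obtain ⟨hyu, hyc, hyW⟩ := hW' (hL'W' hyL')
    rcases hfy with hfy | hfy
    · exact mem_union_left _ (mem_erase.mpr ⟨hyc, mem_filter.mpr ⟨hyW, hfy⟩⟩)
    · exact mem_union_right _ (mem_erase.mpr ⟨hyu, mem_filter.mpr ⟨hyW, hfy⟩⟩)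
  obtain ⟨i, -, hi⟩ := exists_mem_notMem_of_card_lt_card
    (s := T.image col') (t := univ) (card_image_le.trans_lt (by simpa using hT))
  have hfree : ∀ y ∈ L', col' y = i → ∀ v, ¬(v ∈ s(u, c) ∧ v ∈ s(y, f y)) := by
    rintro y hy rfl v ⟨hvu, hvy⟩
    obtain ⟨hyu, hyc, -⟩ := hW' (hL'W' hy)
    have hyT : y ∉ T := fun hyT => hi (mem_image_of_mem col' hyT)
    simp only [T, mem_filter, hy, true_and, not_or] at hyT
    rcases Sym2.mem_iff.mp hvu with rfl | rfl <;> rcases Sym2.mem_iff.mp hvy with h | h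
    all_goals first | exact hyu h.symm | exact hyc h.symm | exact hyT.1 h.symm | exact hyT.2 h.symm
  refine ⟨insert u L', insert_subset huW (hL'W'.trans hW'W), Function.update col' u i,
    hcol'.insert (fun huL' => (hW' (hL'W' huL')).1 rfl) hfree, fun w hw => ?_⟩
  by_cases hwu : w = u
  · exact Or.inl (hwu ▸ mem_insert_self u L')
  by_cases hwc : w = c
  · exact Or.inr ⟨u, mem_insert_self u L', hwc.symm⟩
  rcases hcov' w (mem_erase.mpr ⟨hwc, mem_erase.mpr ⟨hwu, hw⟩⟩) with hwL' | ⟨y, hy, hyw⟩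
  · exact Or.inl (mem_insert_of_mem hwL')
  · exact Or.inr ⟨y, mem_insert_of_mem hy, hyw⟩

end ArrowColoring

theorem exists_matchings_card_le_card_covered_add {V : Type*} [Fintype V] [DecidableEq V]
    (G : SimpleGraph V) [DecidableRel G.Adj] {k : ℕ} (hk : 2 ≤ k) {D : ℕ}
    (hD : ∀ S : Finset V, IsStable G S → #S - k * #(nbr G S) ≤ D) :
    ∃ M : Fin k → Finset (Sym2 V), (∀ i, IsMatching G (M i)) ∧
      Fintype.card V ≤ #{v | ∃ i, Covers (M i) v} + D := by
  obtain ⟨W, f, hW, hadj, hfib⟩ := exists_neighbor_choice G (by omega) hD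
  obtain ⟨L, hLW, col, hcol, hcov⟩ := exists_isArrowColoring hk f W hfib
  obtain ⟨M, hM, hMcov⟩ :=
    exists_matchings_of_isArrowColoring G (fun y hy => hadj y (hLW hy)) hcol
  have hW_covered : W ⊆ ({v | ∃ i, Covers (M i) v} : Finset V) := fun v hv =>
    mem_filter.mpr ⟨mem_univ v, hMcov v (hcov v hv)⟩
  exact ⟨M, hM, hW.trans (Nat.add_le_add_right (card_le_card hW_covered) D)⟩

theorem stmt_4 {V : Type*} [Fintype V] [DecidableEq V] (G : SimpleGraph V) [DecidableRel G.Adj]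
    (k : ℕ) (hk : 2 ≤ k) :
    sSup {n : ℕ | ∃ M : Fin k → Finset (Sym2 V), (∀ i, IsMatching G (M i)) ∧
        n = (Finset.univ.filter fun v : V => ∃ i, Covers (M i) v).card} =
      Fintype.card V -
        sSup {d : ℕ | ∃ S : Finset V, IsStable G S ∧ d = S.card - k * (nbr G S).card} := by
  set B := {d : ℕ | ∃ S : Finset V, IsStable G S ∧ d = S.card - k * (nbr G S).card}
  have hB : BddAbove B := ⟨Fintype.card V, by
    rintro _ ⟨S, -, rfl⟩
    exact (Nat.sub_le _ _).trans (card_le_univ S)⟩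
  obtain ⟨S, hS, hSB⟩ : sSup B ∈ B :=
    Nat.sSup_mem ⟨0, ∅, fun u hu => absurd hu (notMem_empty u), by simp⟩ hB
  obtain ⟨M, hM, hMcard⟩ :=
    exists_matchings_card_le_card_covered_add G hk fun S hS => le_csSup hB ⟨S, hS, rfl⟩
  refine IsGreatest.csSup_eq ⟨⟨M, hM, ?_⟩, ?_⟩
  · have := card_covered_add_defect_le G M hM hS
    omega
  · rintro _ ⟨M', hM', rfl⟩
    have := card_covered_add_defect_le G M' hM' hS
    omega
end

section
/- Let G be a graph, k ≥ 2, and U ⊆ V(G). The maximum number of vertices of U that can be covered by a union of k matchings equals |U| − max{|S| − k·|N(S)| : S ⊆ U is a stable set}. -/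
/-!
A packing of vertex-disjoint stars with at most `k` leaves each gives `k` matchings (slot `i` of
every star forms the `i`-th matching) covering the same vertices. Conversely, in `k` matchings
every covered vertex of a stable set `S` is matched into `N(S)`, and each matching uses each
vertex of `N(S)` once: at most `k |N(S)|` vertices of `S` are covered.

For equality take a star packing covering as many vertices of `U` as possible. Because `k ≥ 2`,
every neighbour of an uncovered vertex of `U` (a hole) is the centre of a full star: otherwise
the hole could be attached to it, if need be after detaching it from its own star, or re-rooting
that star when it is a single edge. Exchanging a leaf of such a star with the hole keeps the
packing maximum, so the leaf lies in `U` and becomes a hole. Hence the vertices reachable from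
the holes along alternating paths (an edge to a centre, then a star edge to a leaf) form a
stable set `S ⊆ U` whose neighbours are full centres with all their leaves in `S`, and
`|S| ≥ #holes + k |N(S)|`.
-/

open Finset

lemma sSup_eq_sub_sSup_of_add_le {A D : Set ℕ} {N : ℕ}
    (hle : ∀ a ∈ A, ∀ d ∈ D, a + d ≤ N) (hge : ∃ a ∈ A, ∃ d ∈ D, N ≤ a + d) :
    sSup A = N - sSup D := by
  obtain ⟨a₀, ha₀, d₀, hd₀, hN⟩ := hge
  have hA : BddAbove A := ⟨N, fun a ha => (Nat.le_add_right a d₀).trans (hle a ha d₀ hd₀)⟩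
  have hD : BddAbove D := ⟨N, fun d hd => (Nat.le_add_left d a₀).trans (hle a₀ ha₀ d hd)⟩
  have h₁ := hle _ (Nat.sSup_mem ⟨a₀, ha₀⟩ hA) _ (Nat.sSup_mem ⟨d₀, hd₀⟩ hD)
  have h₂ := le_csSup hA ha₀
  have h₃ := le_csSup hD hd₀
  omega

section Matchings

variable {V : Type*} [Fintype V] [DecidableEq V] {G : SimpleGraph V} [DecidableRel G.Adj]
  {k : ℕ} {M : Fin k → Finset (Sym2 V)}

lemma card_filter_covers_le (hM : ∀ i, IsMatching G (M i)) {S : Finset V} (hS : IsStable G S) :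
    #(S.filter fun v => ∃ i, Covers (M i) v) ≤ k * #(nbr G S) := by
  calc #(S.filter fun v => ∃ i, Covers (M i) v)
      ≤ #((nbr G S ×ˢ univ).biUnion fun wi : V × Fin k =>
          S.filter fun v => s(v, wi.1) ∈ M wi.2) := by
        refine card_le_card fun v hv => ?_
        obtain ⟨hvS, i, e, he, hve⟩ := mem_filter.1 hv
        have hadj : G.Adj v (Sym2.Mem.other hve) := by
          rw [← SimpleGraph.mem_edgeSet, Sym2.other_spec hve]; exact (hM i).1 he
        refine mem_biUnion.2 ⟨(Sym2.Mem.other hve, i), mem_product.2 ⟨?_, mem_univ _⟩, ?_⟩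
        · exact mem_filter.2 ⟨mem_univ _, fun h => hS v hvS _ h hadj, v, hvS, hadj⟩
        · exact mem_filter.2 ⟨hvS, by rwa [Sym2.other_spec hve]⟩
    _ ≤ ∑ wi ∈ nbr G S ×ˢ univ, 1 := by
        refine card_biUnion_le.trans (sum_le_sum fun wi _ => card_le_one.2 fun u hu v hv => ?_)
        obtain ⟨huS, hu⟩ := mem_filter.1 hu
        obtain ⟨hvS, hv⟩ := mem_filter.1 hv
        by_contra huv
        refine (hM wi.2).2 hu hv (fun h => huv (Sym2.congr_left.1 h)) wi.1
          ⟨Sym2.mem_mk_right _ _, Sym2.mem_mk_right _ _⟩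
    _ = k * #(nbr G S) := by simp [mul_comm]

lemma card_filter_covers_add_le (hM : ∀ i, IsMatching G (M i)) {U S : Finset V} (hSU : S ⊆ U)
    (hS : IsStable G S) :
    #(U.filter fun v => ∃ i, Covers (M i) v) + (#S - k * #(nbr G S)) ≤ #U := by
  have hcov := card_filter_covers_le hM hS
  have hsplitS := card_filter_add_card_filter_not (s := S) fun v => ∃ i, Covers (M i) v
  have hsplitU := card_filter_add_card_filter_not (s := U) fun v => ∃ i, Covers (M i) v
  have hsub := card_le_card (filter_subset_filter (fun v => ¬∃ i, Covers (M i) v) hSU)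
  omega

end Matchings

/-- A packing of vertex-disjoint stars with at most `k` leaves each: `p v = some (c, i)` says
that `v` is a leaf of the star centred at `c`, in slot `i`. Centres are the vertices with a leaf. -/
structure IsStarPacking {V : Type*} {k : ℕ} (G : SimpleGraph V) (p : V → Option (V × Fin k)) :
    Prop where
  adj : ∀ ⦃v c i⦄, p v = some (c, i) → G.Adj v c
  injective : ∀ ⦃v w x⦄, p v = some x → p w = some x → v = w
  center_eq_none : ∀ ⦃v c i⦄, p v = some (c, i) → p c = none

section StarPacking

variable {V : Type*} {G : SimpleGraph V} {U : Finset V} {k : ℕ} {p q : V → Option (V × Fin k)}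
  {u v w : V}

def IsCovered (p : V → Option (V × Fin k)) (v : V) : Prop :=
  p v ≠ none ∨ ∃ u i, p u = some (v, i)

def IsHole (U : Finset V) (p : V → Option (V × Fin k)) (v : V) : Prop :=
  v ∈ U ∧ ¬IsCovered p v

lemma IsHole.eq_none (hv : IsHole U p v) : p v = none := by
  by_contra h; exact hv.2 (Or.inl h)

lemma IsHole.ne_some (hv : IsHole U p v) (u : V) (i : Fin k) : p u ≠ some (v, i) :=
  fun h => hv.2 (Or.inr ⟨u, i, h⟩)

namespace IsStarPacking

variable [DecidableEq V]

lemma update_none (hp : IsStarPacking G p) (x : V) :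
    IsStarPacking G (Function.update p x none) where
  adj v c i h := by
    rw [Function.update_apply] at h; split_ifs at h; exact hp.adj h
  injective v w a hv hw := by
    rw [Function.update_apply] at hv hw; split_ifs at hv hw; exact hp.injective hv hw
  center_eq_none v c i h := by
    rw [Function.update_apply] at h ⊢; split_ifs at h ⊢
    · rfl
    · exact hp.center_eq_none h

lemma update_some (hp : IsStarPacking G p) {x c : V} {i : Fin k} (hxc : G.Adj x c)
    (hfree : ∀ y, p y ≠ some (c, i)) (hc : p c = none) (hx : ∀ y j, p y ≠ some (x, j)) :
    IsStarPacking G (Function.update p x (some (c, i))) where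
  adj v d j h := by
    rw [Function.update_apply] at h; split_ifs at h with hv
    · cases h; exact hv ▸ hxc
    · exact hp.adj h
  injective v w a hv hw := by
    rw [Function.update_apply] at hv hw; split_ifs at hv hw with h₁ h₂ h₂
    · exact h₁.trans h₂.symm
    · cases hv; exact absurd hw (hfree w)
    · cases hw; exact absurd hv (hfree v)
    · exact hp.injective hv hw
  center_eq_none v d j h := by
    rw [Function.update_apply] at h; split_ifs at h with hv
    · cases h; rwa [Function.update_of_ne hxc.ne.symm]
    · have hdx : d ≠ x := by rintro rfl; exact hx v j h
      rw [Function.update_of_ne hdx]; exact hp.center_eq_none h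

end IsStarPacking

variable (G U p) in
def HoleReach : ℕ → V → Prop
  | 0, v => IsHole U p v
  | n + 1, v => HoleReach n v ∨ ∃ v' w i, HoleReach n v' ∧ G.Adj v' w ∧ p v = some (w, i)

lemma HoleReach.isHole_or_ne_none : ∀ {n v}, HoleReach G U p n v → IsHole U p v ∨ p v ≠ none
  | 0, _, hv => Or.inl hv
  | _ + 1, _, Or.inl hv => hv.isHole_or_ne_none
  | _ + 1, _, Or.inr ⟨_, _, _, _, _, hv⟩ => Or.inr (by simp [hv])

variable [Fintype V] [DecidableEq V]

instance (p : V → Option (V × Fin k)) : DecidablePred (IsCovered p) := fun v =>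
  inferInstanceAs (Decidable (p v ≠ none ∨ ∃ u i, p u = some (v, i)))

def coverage (U : Finset V) (p : V → Option (V × Fin k)) : ℕ := #(U.filter (IsCovered p))

variable (G U) in
def IsMaxStarPacking (p : V → Option (V × Fin k)) : Prop :=
  IsStarPacking G p ∧
    ∀ q : V → Option (V × Fin k), IsStarPacking G q → coverage U q ≤ coverage U p

lemma coverage_lt_of_isHole (hv : IsHole U p v) (hqv : IsCovered q v)
    (hpq : ∀ x ∈ U, IsCovered p x → IsCovered q x) : coverage U p < coverage U q := by
  refine card_lt_card ((ssubset_iff_of_subset fun x hx => ?_).2 ⟨v, ?_, ?_⟩)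
  · obtain ⟨hxU, hx⟩ := mem_filter.1 hx
    exact mem_filter.2 ⟨hxU, hpq x hxU hx⟩
  · exact mem_filter.2 ⟨hv.1, hqv⟩
  · exact fun h => hv.2 (mem_filter.1 h).2

lemma exists_isMaxStarPacking (G : SimpleGraph V) (k : ℕ) (U : Finset V) :
    ∃ p : V → Option (V × Fin k), IsMaxStarPacking G U p := by
  classical
  obtain ⟨p, hp, hmax⟩ := (univ.filter (IsStarPacking G)).exists_max_image (coverage U)
    ⟨fun _ => none, mem_filter.2 ⟨mem_univ _, ⟨by simp, by simp, by simp⟩⟩⟩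
  exact ⟨p, (mem_filter.1 hp).2, fun q hq => hmax q (mem_filter.2 ⟨mem_univ _, hq⟩)⟩

lemma IsStarPacking.exists_matchings (hp : IsStarPacking G p) :
    ∃ M : Fin k → Finset (Sym2 V), (∀ i, IsMatching G (M i)) ∧
      ∀ v, IsCovered p v → ∃ i, Covers (M i) v := by
  set M : Fin k → Finset (Sym2 V) := fun i =>
    (univ.filter fun vc : V × V => p vc.1 = some (vc.2, i)).image fun vc => s(vc.1, vc.2)
  have hM : ∀ i e, e ∈ M i ↔ ∃ v c, p v = some (c, i) ∧ s(v, c) = e := by simp [M]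
  refine ⟨M, fun i => ⟨fun e he => ?_, fun e he f hf hef x hx => ?_⟩, ?_⟩
  · obtain ⟨v, c, hv, rfl⟩ := (hM i e).1 he
    exact hp.adj hv
  · obtain ⟨v, c, hv, rfl⟩ := (hM i e).1 he
    obtain ⟨v', c', hv', rfl⟩ := (hM i f).1 hf
    have := @hp.injective
    have := @hp.center_eq_none
    simp only [Sym2.mem_iff] at hx
    grind
  · rintro v (hv | ⟨u, i, hu⟩)
    · obtain ⟨⟨c, i⟩, hv⟩ := Option.ne_none_iff_exists'.1 hv
      exact ⟨i, _, (hM i _).2 ⟨v, c, hv, rfl⟩, Sym2.mem_mk_left _ _⟩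
    · exact ⟨i, _, (hM i _).2 ⟨u, v, hu, rfl⟩, Sym2.mem_mk_right _ _⟩

namespace IsMaxStarPacking

lemma not_coverage_lt (hp : IsMaxStarPacking G U p) (hq : IsStarPacking G q) :
    ¬coverage U p < coverage U q :=
  not_lt.2 (hp.2 q hq)

lemma exists_eq_some_of_adj_isHole (hp : IsMaxStarPacking G U p) (hv : IsHole U p v)
    (hvw : G.Adj v w) (hw : p w = none) (i : Fin k) : ∃ u, p u = some (w, i) := by
  by_contra! hfree
  refine hp.not_coverage_lt (hp.1.update_some hvw hfree hw hv.ne_some)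
    (coverage_lt_of_isHole hv (by simp [IsCovered]) ?_)
  have := hv.eq_none
  simp only [IsCovered, Function.update_apply]
  grind

lemma eq_none_of_adj_isHole (hk : 2 ≤ k) (hp : IsMaxStarPacking G U p) (hv : IsHole U p v)
    (hvw : G.Adj v w) : p w = none := by
  by_contra hw
  obtain ⟨⟨c, j⟩, hwc⟩ := Option.ne_none_iff_exists'.1 hw
  have hw_leafless : ∀ y i, p y ≠ some (w, i) := fun y i h => by
    simp [hp.1.center_eq_none h] at hwc
  have hc : p c = none := hp.1.center_eq_none hwc
  have hvn := hv.eq_none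
  have hvs := hv.ne_some
  have hp₁ := hp.1.update_none w
  by_cases hc_other : ∃ y ≠ w, ∃ j', p y = some (c, j')
  · -- detach `w` from `c`, which keeps a leaf, and hang `v` on `w`
    obtain ⟨y, hyw, j', hy⟩ := hc_other
    have hq := hp₁.update_some (i := ⟨0, by omega⟩) hvw (by grind [Function.update_apply])
      (Function.update_self _ _ _) (by grind [Function.update_apply])
    refine hp.not_coverage_lt hq (coverage_lt_of_isHole hv (by simp [IsCovered]) ?_)
    simp only [IsCovered, Function.update_apply]
    grind
  · -- the star at `c` is the edge `cw`: re-root it at `w` and hang `v` on `w` as a second leaf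
    push Not at hc_other
    have hp₂ := hp₁.update_some (x := c) (i := ⟨0, by omega⟩) (hp.1.adj hwc).symm
      (by grind [Function.update_apply]) (Function.update_self _ _ _)
      (by grind [Function.update_apply])
    have hq := hp₂.update_some (i := ⟨1, by omega⟩) hvw (by grind [Function.update_apply])
      (by grind [Function.update_apply]) (by grind [Function.update_apply])
    refine hp.not_coverage_lt hq (coverage_lt_of_isHole hv (by simp [IsCovered]) ?_)
    simp only [IsCovered, Function.update_apply]
    grind

lemma comp_swap (hp : IsMaxStarPacking G U p) (hv : IsHole U p v) (hvw : G.Adj v w) {i : Fin k}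
    (hu : p u = some (w, i)) :
    IsMaxStarPacking G U (p ∘ Equiv.swap u v) ∧ IsHole U (p ∘ Equiv.swap u v) u := by
  have hvn := hv.eq_none
  have hvs := hv.ne_some
  have hwn := hp.1.center_eq_none hu
  have hinj := @hp.1.injective
  have hu_leafless : ∀ y j, p y ≠ some (u, j) := fun y j h => by
    simp [hp.1.center_eq_none h] at hu
  have huv : u ≠ v := by rintro rfl; simp [hu] at hvn
  have hq : p ∘ Equiv.swap u v = Function.update (Function.update p u none) v (some (w, i)) := by
    funext x; simp only [Function.comp_apply, Equiv.swap_apply_def, Function.update_apply]; grind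
  have hcov (x : V) :
      IsCovered (p ∘ Equiv.swap u v) x ↔ x = v ∨ x ≠ u ∧ IsCovered p x := by
    simp only [hq, IsCovered, Function.update_apply]; grind
  have hqp : IsStarPacking G (p ∘ Equiv.swap u v) := by
    rw [hq]
    exact (hp.1.update_none u).update_some hvw (by grind [Function.update_apply])
      (by grind [Function.update_apply]) (by grind [Function.update_apply])
  have huU : u ∈ U := by
    by_contra huU
    exact hp.not_coverage_lt hqp (coverage_lt_of_isHole hv ((hcov v).2 (Or.inl rfl))
      fun x hx hpx => (hcov x).2 (Or.inr ⟨by rintro rfl; exact huU hx, hpx⟩))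
  have hpu : u ∈ U.filter (IsCovered p) := mem_filter.2 ⟨huU, Or.inl (by simp [hu])⟩
  have hfilter : U.filter (IsCovered (p ∘ Equiv.swap u v)) =
      insert v ((U.filter (IsCovered p)).erase u) := by
    ext x; simp only [mem_filter, mem_insert, mem_erase, hcov]; grind [IsHole]
  have hcard : coverage U (p ∘ Equiv.swap u v) = coverage U p := by
    rw [coverage, coverage, hfilter, card_insert_of_notMem (by simp [hv.2]),
      card_erase_add_one hpu]
  exact ⟨⟨hqp, fun r hr => hcard ▸ hp.2 r hr⟩, huU,
    fun h => ((hcov u).1 h).elim huv fun h => h.1 rfl⟩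

lemma exists_perm_isHole_of_holeReach (hp : IsMaxStarPacking G U p) :
    ∀ {n v}, HoleReach G U p n v → ∃ σ : Equiv.Perm V, IsMaxStarPacking G U (p ∘ σ) ∧
      IsHole U (p ∘ σ) v ∧ ∀ u, p (σ u) ≠ p u → HoleReach G U p n u
  | 0, v, hv => ⟨1, hp, hv, fun u h => absurd rfl h⟩
  | n + 1, v, Or.inl hv => by
    obtain ⟨σ, hσ, hσv, hchanged⟩ := exists_perm_isHole_of_holeReach hp hv
    exact ⟨σ, hσ, hσv, fun u hu => Or.inl (hchanged u hu)⟩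
  | n + 1, v, Or.inr ⟨v', w, i, hv', hv'w, hv⟩ => by
    obtain ⟨σ, hσ, hσv', hchanged⟩ := exists_perm_isHole_of_holeReach hp hv'
    by_cases hσv : p (σ v) = p v
    · obtain ⟨hmax, hhole⟩ := hσ.comp_swap hσv' hv'w (hσv.trans hv)
      refine ⟨σ * Equiv.swap v v', hmax, hhole, fun u hu => ?_⟩
      by_cases huv : u = v ∨ u = v'
      · rcases huv with rfl | rfl
        · exact Or.inr ⟨v', w, i, hv', hv'w, hv⟩
        · exact Or.inl hv'
      · push Not at huv
        rw [Equiv.Perm.mul_apply, Equiv.swap_apply_of_ne_of_ne huv.1 huv.2] at hu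
        exact Or.inl (hchanged u hu)
    · -- `σ` moved `v`, so `v` is reachable at level `n` already
      obtain ⟨τ, hτ, hτv, hchanged'⟩ := exists_perm_isHole_of_holeReach hp (hchanged v hσv)
      exact ⟨τ, hτ, hτv, fun u hu => Or.inl (hchanged' u hu)⟩

lemma mem_range_of_holeReach_of_adj (hk : 2 ≤ k) (hp : IsMaxStarPacking G U p) {n : ℕ}
    (hv : HoleReach G U p n v) (hvw : G.Adj v w) (i : Fin k) : some (w, i) ∈ Set.range p := by
  obtain ⟨σ, hσ, hσv, -⟩ := hp.exists_perm_isHole_of_holeReach hv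
  rw [← EquivLike.range_comp p σ]
  exact hσ.exists_eq_some_of_adj_isHole hσv hvw (hσ.eq_none_of_adj_isHole hk hσv hvw) i

lemma exists_isStable_card_le (hk : 2 ≤ k) (hp : IsMaxStarPacking G U p) [DecidableRel G.Adj] :
    ∃ S ⊆ U, IsStable G S ∧ #U ≤ coverage U p + (#S - k * #(nbr G S)) := by
  classical
  set S := univ.filter fun v => ∃ n, HoleReach G U p n v
  have hfull : ∀ v ∈ S, ∀ w, G.Adj v w → ∀ i, some (w, i) ∈ Set.range p := by
    intro v hv w hvw i
    obtain ⟨_, hv⟩ := (mem_filter.1 hv).2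
    exact hp.mem_range_of_holeReach_of_adj hk hv hvw i
  have hSU : S ⊆ U := fun v hv => by
    obtain ⟨_, hv⟩ := (mem_filter.1 hv).2
    obtain ⟨σ, -, hσv, -⟩ := hp.exists_perm_isHole_of_holeReach hv
    exact hσv.1
  have hS : IsStable G S := fun u hu v hv huv => by
    obtain ⟨y, hy⟩ := hfull v hv u huv.symm ⟨0, by omega⟩
    obtain ⟨_, hu⟩ := (mem_filter.1 hu).2
    rcases hu.isHole_or_ne_none with hu | hu
    · exact hu.2 (Or.inr ⟨y, _, hy⟩)
    · exact hu (hp.1.center_eq_none hy)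
  set H := U.filter fun v => ¬IsCovered p v
  set L := univ.filter fun u => ∃ w ∈ nbr G S, ∃ i, p u = some (w, i)
  have hHS : H ⊆ S := fun v hv => mem_filter.2 ⟨mem_univ _, 0, mem_filter.1 hv⟩
  have hLS : L ⊆ S := fun u hu => by
    obtain ⟨w, hw, i, hu⟩ := (mem_filter.1 hu).2
    obtain ⟨-, -, v, hv, hvw⟩ := mem_filter.1 hw
    obtain ⟨n, hv⟩ := (mem_filter.1 hv).2
    exact mem_filter.2 ⟨mem_univ _, n + 1, Or.inr ⟨v, w, i, hv, hvw, hu⟩⟩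
  have hHL : Disjoint H L := disjoint_left.2 fun v hvH hvL => by
    obtain ⟨_, -, i, hv⟩ := (mem_filter.1 hvL).2
    exact (mem_filter.1 hvH).2 (Or.inl (by simp [hv]))
  have hL : k * #(nbr G S) ≤ #L := calc
    k * #(nbr G S) = #((nbr G S ×ˢ (univ : Finset (Fin k))).image some) := by
      rw [card_image_of_injective _ (Option.some_injective _), card_product, card_univ,
        Fintype.card_fin, mul_comm]
    _ ≤ #L := card_le_card_of_surjOn p fun x hx => by
      obtain ⟨⟨w, i⟩, hwi, rfl⟩ := mem_image.1 hx
      have hw := (mem_product.1 hwi).1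
      obtain ⟨-, -, v, hv, hvw⟩ := mem_filter.1 hw
      obtain ⟨u, hu⟩ := hfull v hv w hvw i
      exact ⟨u, mem_filter.2 ⟨mem_univ _, w, hw, i, hu⟩, hu⟩
  have hU : coverage U p + #H = #U := card_filter_add_card_filter_not _
  have hHL_card := card_le_card (union_subset hHS hLS)
  rw [card_union_of_disjoint hHL] at hHL_card
  exact ⟨S, hSU, hS, by omega⟩

end IsMaxStarPacking

end StarPacking

theorem stmt_5 {V : Type*} [Fintype V] [DecidableEq V] (G : SimpleGraph V) [DecidableRel G.Adj]
    (k : ℕ) (hk : 2 ≤ k) (U : Finset V) :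
    sSup {n : ℕ | ∃ M : Fin k → Finset (Sym2 V), (∀ i, IsMatching G (M i)) ∧
        n = (U.filter fun v : V => ∃ i, Covers (M i) v).card} =
      U.card -
        sSup {d : ℕ | ∃ S : Finset V, S ⊆ U ∧ IsStable G S ∧
          d = S.card - k * (nbr G S).card} := by
  refine sSup_eq_sub_sSup_of_add_le ?_ ?_
  · rintro _ ⟨M, hM, rfl⟩ _ ⟨S, hSU, hS, rfl⟩
    exact card_filter_covers_add_le hM hSU hS
  · obtain ⟨p, hp⟩ := exists_isMaxStarPacking G k U
    obtain ⟨S, hSU, hS, hU⟩ := hp.exists_isStable_card_le hk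
    obtain ⟨M, hM, hcov⟩ := hp.1.exists_matchings
    refine ⟨_, ⟨M, hM, rfl⟩, _, ⟨S, hSU, hS, rfl⟩, hU.trans (Nat.add_le_add_right ?_ _)⟩
    exact card_le_card (monotone_filter_right U fun v _ hv => hcov v hv)
end

section
/- Let G be a graph and k a positive integer. An edge set F ⊆ E(G) is an inclusionwise minimal perfect k-star packing if and only if it is an inclusionwise minimal matching-k-cover, which in turn holds if and only if it is an inclusionwise minimal (1,k)-factor. -/
/-- `F` is a perfect `k`-star packing: every component of `F` is a star with
between 1 and `k` edges, and `F` covers every vertex.  Components are stars with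
at most `k` edges iff all degrees are at most `k` and no edge joins two vertices
of degree at least 2. -/
def IsPerfectKStarPacking {V : Type*} [DecidableEq V] (G : SimpleGraph V)
    (F : Finset (Sym2 V)) (k : ℕ) : Prop :=
  ↑F ⊆ G.edgeSet ∧ (∀ v : V, degF F v ≤ k) ∧
    (∀ e ∈ F, ∀ u v : V, e = s(u, v) → degF F u = 1 ∨ degF F v = 1) ∧
    ∀ v : V, Covers F v

/-- `F` is a matching-`k`-cover: the union of `k` matchings of `G` covering every vertex. -/
def IsMatchingKCover {V : Type*} [DecidableEq V] (G : SimpleGraph V) (F : Finset (Sym2 V)) (k : ℕ) : Prop :=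
  (∃ M : Fin k → Finset (Sym2 V), (∀ i, IsMatching G (M i)) ∧ F = Finset.univ.sup M) ∧
    ∀ v : V, Covers F v

/-- `F` is a `(1,k)`-factor: every vertex is incident to at least 1 and at most `k` edges of `F`. -/
def Is1kFactor {V : Type*} [DecidableEq V] (G : SimpleGraph V)
    (F : Finset (Sym2 V)) (k : ℕ) : Prop :=
  ↑F ⊆ G.edgeSet ∧ ∀ v : V, 1 ≤ degF F v ∧ degF F v ≤ k

/-- inclusionwise minimality of an edge set with respect to a property -/
def EdgeSetMinimalFor {V : Type*} (P : Finset (Sym2 V) → Prop) (F : Finset (Sym2 V)) : Prop :=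
  P F ∧ ∀ F' ⊂ F, ¬ P F'

/-!
A union of `k` matchings has all degrees at most `k`, and a perfect `k`-star packing is a union of
`k` matchings: all edges of a star share its centre, so numbering the edges at each centre
injectively by `0, …, k - 1` colours the packing with `k` matchings. Conversely, in a minimal
`(1,k)`-factor no edge joins two vertices of degree at least 2, since such an edge could be
removed; hence a minimal `(1,k)`-factor is a perfect `k`-star packing. With these implications,
minimality transfers between the three properties because every `(1,k)`-factor contains a minimal
one.
-/

open Finset

theorem Finset.exists_natColoring_injOn_fibers {α β : Type*} [DecidableEq β] (s : Finset α)
    (c : α → β) {k : ℕ} (h : ∀ b, #{x ∈ s | c x = b} ≤ k) :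
    ∃ g : α → ℕ, (∀ x ∈ s, g x < k) ∧ ∀ x ∈ s, ∀ y ∈ s, c x = c y → g x = g y → x = y := by
  have hfiber : ∀ b, ∃ f : α → ℕ,
      (∀ x ∈ {x ∈ s | c x = b}, f x < k) ∧ Set.InjOn f ↑{x ∈ s | c x = b} := by
    intro b
    obtain ⟨f, hmaps, hinj⟩ := (finite_toSet {x ∈ s | c x = b}).exists_injOn_of_encard_le
      (t := ((range k : Finset ℕ) : Set ℕ)) (by
        rw [Set.encard_coe_eq_coe_finsetCard, Set.encard_coe_eq_coe_finsetCard, card_range]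
        exact_mod_cast h b)
    exact ⟨f, fun x hx => mem_range.1 (hmaps hx), hinj⟩
  choose f hf_lt hf_inj using hfiber
  refine ⟨fun x => f (c x) x, fun x hx => hf_lt _ x (mem_filter.2 ⟨hx, rfl⟩), ?_⟩
  intro x hx y hy hxy hfxy
  have hfxy' : f (c y) x = f (c y) y := by simpa only [hxy] using hfxy
  exact hf_inj (c y) (mem_filter.2 ⟨hx, hxy⟩) (mem_filter.2 ⟨hy, rfl⟩) hfxy'

section EdgeSetMinimalFor

variable {V : Type*}

theorem edgeSetMinimalFor_iff_minimal {P : Finset (Sym2 V) → Prop} {F : Finset (Sym2 V)} :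
    EdgeSetMinimalFor P F ↔ Minimal P F := by
  rw [minimal_iff_forall_lt, EdgeSetMinimalFor]

theorem edgeSetMinimalFor_congr_of_imp {P Q : Finset (Sym2 V) → Prop}
    (hPQ : ∀ F, P F → Q F) (hQP : ∀ F, EdgeSetMinimalFor Q F → P F) (F : Finset (Sym2 V)) :
    EdgeSetMinimalFor P F ↔ EdgeSetMinimalFor Q F := by
  refine ⟨fun ⟨hP, hmin⟩ => ⟨hPQ F hP, fun F' hF' hQ => ?_⟩,
    fun hQ => ⟨hQP F hQ, fun F' hF' hP => hQ.2 F' hF' (hPQ F' hP)⟩⟩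
  obtain ⟨F'', hF'', hmin''⟩ := exists_minimal_le_of_wellFoundedLT Q F' hQ
  exact hmin F'' (hF''.trans_lt hF') (hQP F'' (edgeSetMinimalFor_iff_minimal.2 hmin''))

end EdgeSetMinimalFor

section Degree

variable {V : Type*} [DecidableEq V]

theorem covers_iff_one_le_degF (F : Finset (Sym2 V)) (v : V) : Covers F v ↔ 1 ≤ degF F v := by
  rw [Nat.one_le_iff_ne_zero, degF, Ne, card_eq_zero, ← Ne, ← nonempty_iff_ne_empty,
    filter_nonempty_iff, Covers]

theorem degF_mono {F F' : Finset (Sym2 V)} (h : F' ⊆ F) (v : V) : degF F' v ≤ degF F v :=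
  card_le_card (filter_subset_filter _ h)

theorem degF_le_degF_erase_add_one (F : Finset (Sym2 V)) (e : Sym2 V) (v : V) :
    degF F v ≤ degF (F.erase e) v + 1 := by
  rw [degF, degF, filter_erase]
  exact Nat.sub_le_iff_le_add.1 pred_card_le_card_erase

theorem degF_erase_of_notMem {F : Finset (Sym2 V)} {e : Sym2 V} {v : V} (hv : v ∉ e) :
    degF (F.erase e) v = degF F v := by
  rw [degF, degF, filter_erase]
  exact congrArg card (erase_eq_of_notMem fun he => hv (mem_filter.1 he).2)

theorem degF_sup_le_sum {ι : Type*} (s : Finset ι) (M : ι → Finset (Sym2 V)) (v : V) :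
    degF (s.sup M) v ≤ ∑ i ∈ s, degF (M i) v := by
  rw [degF, sup_eq_biUnion, filter_biUnion]
  exact card_biUnion_le

theorem IsMatching.degF_le_one {G : SimpleGraph V} {M : Finset (Sym2 V)} (hM : IsMatching G M)
    (v : V) : degF M v ≤ 1 :=
  card_le_one.2 fun e he f hf => by
    rw [mem_filter] at he hf
    by_contra hne
    exact hM.2 he.1 hf.1 hne v ⟨he.2, hf.2⟩

end Degree

section Factors

variable {V : Type*} [DecidableEq V] {G : SimpleGraph V} {F : Finset (Sym2 V)} {k : ℕ}

theorem IsMatchingKCover.is1kFactor (h : IsMatchingKCover G F k) : Is1kFactor G F k := by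
  obtain ⟨⟨M, hM, rfl⟩, hcov⟩ := h
  refine ⟨fun e he => ?_, fun v => ⟨(covers_iff_one_le_degF _ v).1 (hcov v), ?_⟩⟩
  · obtain ⟨i, -, hi⟩ := mem_sup.1 he
    exact (hM i).1 hi
  · calc degF (univ.sup M) v ≤ ∑ i, degF (M i) v := degF_sup_le_sum _ _ v
      _ ≤ ∑ _ : Fin k, 1 := sum_le_sum fun i _ => (hM i).degF_le_one v
      _ = k := by simp

theorem IsPerfectKStarPacking.exists_center (h : IsPerfectKStarPacking G F k) :
    ∃ c : Sym2 V → V, ∀ e ∈ F, c e ∈ e ∧ ∀ f ∈ F, e ≠ f → ∀ v ∈ e, v ∈ f → c e = v := by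
  have hcentre : ∀ e : Sym2 V, ∃ w ∈ e, e ∈ F → ∀ x ∈ e, x ≠ w → degF F x = 1 := by
    refine Sym2.ind fun u v => ?_
    by_cases hF : s(u, v) ∈ F
    · rcases h.2.2.1 _ hF u v rfl with hu | hv
      · refine ⟨v, Sym2.mem_mk_right u v, fun _ x hx hxv => ?_⟩
        rcases Sym2.mem_iff.1 hx with rfl | rfl
        exacts [hu, absurd rfl hxv]
      · refine ⟨u, Sym2.mem_mk_left u v, fun _ x hx hxu => ?_⟩
        rcases Sym2.mem_iff.1 hx with rfl | rfl
        exacts [absurd rfl hxu, hv]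
    · exact ⟨u, Sym2.mem_mk_left u v, fun h' => absurd h' hF⟩
  choose c hc_mem hc_leaf using hcentre
  refine ⟨c, fun e he => ⟨hc_mem e, fun f hf hne v hve hvf => ?_⟩⟩
  by_contra hcv
  have hv_deg : 1 < degF F v :=
    one_lt_card.2 ⟨e, mem_filter.2 ⟨he, hve⟩, f, mem_filter.2 ⟨hf, hvf⟩, hne⟩
  have hv_leaf := hc_leaf e he v hve (Ne.symm hcv)
  omega

theorem IsPerfectKStarPacking.isMatchingKCover (h : IsPerfectKStarPacking G F k) :
    IsMatchingKCover G F k := by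
  obtain ⟨c, hc⟩ := h.exists_center
  have hfiber (b : V) : #{e ∈ F | c e = b} ≤ k := by
    refine (card_le_card fun e he => ?_).trans (h.2.1 b)
    obtain ⟨heF, rfl⟩ := mem_filter.1 he
    exact mem_filter.2 ⟨heF, (hc e heF).1⟩
  obtain ⟨g, hg_lt, hg_inj⟩ := exists_natColoring_injOn_fibers F c hfiber
  refine ⟨⟨fun i => {e ∈ F | g e = i}, fun i => ⟨fun e he => h.1 (mem_filter.1 he).1, ?_⟩, ?_⟩,
    h.2.2.2⟩
  · intro e he f hf hne v ⟨hve, hvf⟩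
    rw [mem_coe, mem_filter] at he hf
    have hce := (hc e he.1).2 f hf.1 hne v hve hvf
    have hcf := (hc f hf.1).2 e he.1 (Ne.symm hne) v hvf hve
    exact hne (hg_inj e he.1 f hf.1 (hce.trans hcf.symm) (he.2.trans hf.2.symm))
  · ext e
    simp only [mem_sup, mem_univ, true_and, mem_filter]
    exact ⟨fun he => ⟨⟨g e, hg_lt e he⟩, he, rfl⟩, fun ⟨_, he, _⟩ => he⟩

theorem EdgeSetMinimalFor.isPerfectKStarPacking
    (h : EdgeSetMinimalFor (fun F' => Is1kFactor G F' k) F) : IsPerfectKStarPacking G F k := by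
  obtain ⟨⟨hsub, hdeg⟩, hmin⟩ := h
  refine ⟨hsub, fun v => (hdeg v).2, fun e he u v huv => ?_,
    fun v => (covers_iff_one_le_degF F v).2 (hdeg v).1⟩
  by_contra! hleaf
  refine hmin (F.erase e) (erase_ssubset he) ⟨fun f hf => hsub (mem_of_mem_erase hf),
    fun w => ⟨?_, (degF_mono (erase_subset e F) w).trans (hdeg w).2⟩⟩
  by_cases hw : w ∈ e
  · have hw_erase := degF_le_degF_erase_add_one F e w
    have hw_pos := (hdeg w).1
    rcases Sym2.mem_iff.1 (huv ▸ hw) with rfl | rfl <;> omega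
  · exact (degF_erase_of_notMem hw).symm ▸ (hdeg w).1

end Factors

theorem stmt_7_general {V : Type*} [DecidableEq V] (G : SimpleGraph V)
    (k : ℕ) (F : Finset (Sym2 V)) :
    (EdgeSetMinimalFor (fun F' => IsPerfectKStarPacking G F' k) F ↔
        EdgeSetMinimalFor (fun F' => IsMatchingKCover G F' k) F) ∧
      (EdgeSetMinimalFor (fun F' => IsMatchingKCover G F' k) F ↔
        EdgeSetMinimalFor (fun F' => Is1kFactor G F' k) F) := by
  have packing_iff_factor : EdgeSetMinimalFor (fun F' => IsPerfectKStarPacking G F' k) F ↔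
      EdgeSetMinimalFor (fun F' => Is1kFactor G F' k) F :=
    edgeSetMinimalFor_congr_of_imp (fun _ h => h.isMatchingKCover.is1kFactor)
      (fun _ h => h.isPerfectKStarPacking) F
  have cover_iff_factor : EdgeSetMinimalFor (fun F' => IsMatchingKCover G F' k) F ↔
      EdgeSetMinimalFor (fun F' => Is1kFactor G F' k) F :=
    edgeSetMinimalFor_congr_of_imp (fun _ h => h.is1kFactor)
      (fun _ h => h.isPerfectKStarPacking.isMatchingKCover) F
  exact ⟨packing_iff_factor.trans cover_iff_factor.symm, cover_iff_factor⟩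

theorem stmt_7 {V : Type*} [Fintype V] [DecidableEq V] (G : SimpleGraph V)
    (k : ℕ) (hk : 0 < k) (F : Finset (Sym2 V)) :
    (EdgeSetMinimalFor (fun F' => IsPerfectKStarPacking G F' k) F ↔
        EdgeSetMinimalFor (fun F' => IsMatchingKCover G F' k) F) ∧
      (EdgeSetMinimalFor (fun F' => IsMatchingKCover G F' k) F ↔
        EdgeSetMinimalFor (fun F' => Is1kFactor G F' k) F) :=
  stmt_7_general G k F
end

section
/- Let G be a graph, k ≥ 2, and ℓ: V(G) → {0,…,k−1}. If F is an inclusionwise minimal (ℓ,k)-factor of G, then F can be partitioned into k matchings such that each vertex v is covered by at least ℓ(v) of them. -/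
/-!
Minimality forces every edge of `F` to have an endpoint of degree less than `k`: otherwise
deleting the edge would leave an `(ℓ, k)`-factor. By Fournier's theorem `F` then has a proper
`k`-edge-colouring; its colour classes are matchings, and `v` meets `degF F v ≥ ℓ v` of them.

Fournier's theorem goes by induction on the number of edges. There is an edge `uv` all of whose
`u`-neighbours have degree `< k` (take `u` of degree `k` if some edge has such an endpoint). After
colouring the other edges, `u` and all its neighbours miss a colour, and Vizing's fan argument,
with a swap along an alternating Kempe path, extends the colouring to `uv`.
-/

namespace SimpleGraph

variable {V : Type*} {G : SimpleGraph V}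

theorem Walk.IsPath.eq_of_neighborSet_subsingleton
    (h2 : ∀ x y, G.Adj x y → (G.neighborSet x \ {y}).Subsingleton)
    {u z v w : V} {p : G.Walk z v} {q : G.Walk z w} (hp : p.IsPath) (hq : q.IsPath)
    (hzu : G.Adj z u) (hup : u ∉ p.support) (huq : u ∉ q.support)
    (hv : (G.neighborSet v).Subsingleton) (hw : (G.neighborSet w).Subsingleton) : v = w := by
  induction p generalizing u with
  | nil =>
    cases q with
    | nil => rfl
    | cons hzy q => exact (huq (by rw [hv hzu hzy]; simp)).elim
  | cons hzy p ih =>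
    cases q with
    | nil => exact (hup (by rw [hw hzu hzy]; simp)).elim
    | cons hzy' q =>
      rw [Walk.cons_isPath_iff] at hp hq
      obtain rfl := h2 _ _ hzu ⟨hzy, fun h => hup (by rw [← Set.mem_singleton_iff.1 h]; simp)⟩
        ⟨hzy', fun h => huq (by rw [← Set.mem_singleton_iff.1 h]; simp)⟩
      exact ih hp.1 hq.1 hzy.symm hp.2 hq.2 hv

/-- In a graph of maximum degree two, a connected component has at most two vertices of degree
at most one. -/
theorem Reachable.eq_of_neighborSet_subsingleton
    (h2 : ∀ x y, G.Adj x y → (G.neighborSet x \ {y}).Subsingleton) {u v w : V}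
    (hu : (G.neighborSet u).Subsingleton) (hv : (G.neighborSet v).Subsingleton)
    (hw : (G.neighborSet w).Subsingleton) (huv : u ≠ v) (huw : u ≠ w)
    (h₁ : G.Reachable u v) (h₂ : G.Reachable u w) : v = w := by
  obtain ⟨p, hp⟩ := h₁.exists_isPath
  obtain ⟨q, hq⟩ := h₂.exists_isPath
  cases p with
  | nil => exact absurd rfl huv
  | cons hy p =>
    cases q with
    | nil => exact absurd rfl huw
    | cons hy' q =>
      rw [Walk.cons_isPath_iff] at hp hq
      obtain rfl := hu hy hy'
      exact hp.1.eq_of_neighborSet_subsingleton h2 hq.1 hy.symm hp.2 hq.2 hv hw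

end SimpleGraph

section EdgeColoring

variable {V : Type*} {k : ℕ}

def IsProperEdgeColoring (A : Finset (Sym2 V)) (c : Sym2 V → Fin k) : Prop :=
  ∀ ⦃x : V⦄ ⦃e f : Sym2 V⦄, e ∈ A → f ∈ A → x ∈ e → x ∈ f → c e = c f → e = f

def IsMissingAt (A : Finset (Sym2 V)) (c : Sym2 V → Fin k) (x : V) (γ : Fin k) : Prop :=
  ∀ e ∈ A, x ∈ e → c e ≠ γ

variable (k) in
def EdgeColorable (A : Finset (Sym2 V)) : Prop :=
  ∃ c : Sym2 V → Fin k, IsProperEdgeColoring A c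

variable {A : Finset (Sym2 V)} {c : Sym2 V → Fin k}

theorem IsProperEdgeColoring.eq_of_mk_color_eq (hc : IsProperEdgeColoring A c) {x a b : V}
    (ha : s(x, a) ∈ A) (hb : s(x, b) ∈ A) (h : c s(x, a) = c s(x, b)) : a = b :=
  Sym2.congr_right.1 (hc ha hb (Sym2.mem_mk_left x a) (Sym2.mem_mk_left x b) h)

theorem IsProperEdgeColoring.isMatching {G : SimpleGraph V} {F : Finset (Sym2 V)}
    (hF : ↑F ⊆ G.edgeSet) (hc : IsProperEdgeColoring F c) (i : Fin k) :
    IsMatching G (F.filter (c · = i)) :=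
  ⟨fun _ he => hF (Finset.mem_filter.1 he).1, fun _ he _ hf hef _ hx =>
    hef (hc (Finset.mem_filter.1 he).1 (Finset.mem_filter.1 hf).1 hx.1 hx.2
      ((Finset.mem_filter.1 he).2.trans (Finset.mem_filter.1 hf).2.symm))⟩

section Kempe

variable {α β γ : Fin k} {x z : V} {e : Sym2 V}

def kempeGraph (A : Finset (Sym2 V)) (c : Sym2 V → Fin k) (α β : Fin k) : SimpleGraph V :=
  SimpleGraph.fromEdgeSet {e | e ∈ A ∧ (c e = α ∨ c e = β)}

theorem kempeGraph_reachable_of_mem (he : e ∈ A) (hce : c e = α ∨ c e = β) {y : V}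
    (hx : x ∈ e) (hy : y ∈ e) : (kempeGraph A c α β).Reachable x y := by
  by_cases hxy : x = y
  · exact hxy ▸ SimpleGraph.Reachable.refl x
  · rw [(Sym2.mem_and_mem_iff hxy).1 ⟨hx, hy⟩] at he hce
    exact (show (kempeGraph A c α β).Adj x y from
      (SimpleGraph.fromEdgeSet_adj _).2 ⟨⟨he, hce⟩, hxy⟩).reachable

theorem kempeGraph_neighborSet_diff_subsingleton (hc : IsProperEdgeColoring A c) {y : V}
    (hxy : (kempeGraph A c α β).Adj x y) :
    ((kempeGraph A c α β).neighborSet x \ {y}).Subsingleton := by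
  rintro a ⟨ha, hay⟩ b ⟨hb, hby⟩
  simp only [SimpleGraph.mem_neighborSet, kempeGraph, SimpleGraph.fromEdgeSet_adj,
    Set.mem_ofPred_eq, Set.mem_singleton_iff] at ha hb hxy hay hby
  rcases ha.1.2 with h1 | h1 <;> rcases hb.1.2 with h2 | h2 <;> rcases hxy.1.2 with h3 | h3 <;>
  first
  | exact hc.eq_of_mk_color_eq ha.1.1 hb.1.1 (h1.trans h2.symm)
  | exact absurd (hc.eq_of_mk_color_eq ha.1.1 hxy.1.1 (h1.trans h3.symm)) hay
  | exact absurd (hc.eq_of_mk_color_eq hb.1.1 hxy.1.1 (h2.trans h3.symm)) hby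

theorem kempeGraph_neighborSet_subsingleton (hc : IsProperEdgeColoring A c)
    (hx : IsMissingAt A c x α ∨ IsMissingAt A c x β) :
    ((kempeGraph A c α β).neighborSet x).Subsingleton := by
  intro a ha b hb
  simp only [SimpleGraph.mem_neighborSet, kempeGraph, SimpleGraph.fromEdgeSet_adj,
    Set.mem_ofPred_eq] at ha hb
  have hxa := Sym2.mem_mk_left x a
  have hxb := Sym2.mem_mk_left x b
  refine hc.eq_of_mk_color_eq ha.1.1 hb.1.1 ?_
  rcases hx with hx | hx <;>
  · have := hx _ ha.1.1 hxa
    have := hx _ hb.1.1 hxb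
    grind

open Classical in
/-- `Equiv.swap α β` fixes all other colours, so only the `α`/`β`-edges of the component of `z`
change colour. -/
noncomputable def kempeSwap (A : Finset (Sym2 V)) (c : Sym2 V → Fin k) (α β : Fin k) (z : V) :
    Sym2 V → Fin k := fun e =>
  if ∃ x ∈ e, (kempeGraph A c α β).Reachable z x then Equiv.swap α β (c e) else c e

theorem kempeSwap_apply_of_reachable (hx : x ∈ e) (h : (kempeGraph A c α β).Reachable z x) :
    kempeSwap A c α β z e = Equiv.swap α β (c e) :=
  if_pos ⟨x, hx, h⟩

theorem kempeSwap_apply_of_not_reachable (he : e ∈ A) (hx : x ∈ e)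
    (h : ¬(kempeGraph A c α β).Reachable z x) : kempeSwap A c α β z e = c e := by
  unfold kempeSwap
  split_ifs with hr
  · obtain ⟨y, hy, hzy⟩ := hr
    by_cases hce : c e = α ∨ c e = β
    · exact absurd (hzy.trans (kempeGraph_reachable_of_mem he hce hy hx)) h
    · exact Equiv.swap_apply_of_ne_of_ne (not_or.1 hce).1 (not_or.1 hce).2
  · rfl

theorem isProperEdgeColoring_kempeSwap (hc : IsProperEdgeColoring A c) :
    IsProperEdgeColoring A (kempeSwap A c α β z) := by
  intro x e f he hf hxe hxf h
  by_cases hz : (kempeGraph A c α β).Reachable z x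
  · rw [kempeSwap_apply_of_reachable hxe hz, kempeSwap_apply_of_reachable hxf hz] at h
    exact hc he hf hxe hxf ((Equiv.swap α β).injective h)
  · rw [kempeSwap_apply_of_not_reachable he hxe hz, kempeSwap_apply_of_not_reachable hf hxf hz] at h
    exact hc he hf hxe hxf h

theorem IsMissingAt.kempeSwap_of_not_reachable (h : IsMissingAt A c x γ)
    (hx : ¬(kempeGraph A c α β).Reachable z x) : IsMissingAt A (kempeSwap A c α β z) x γ := by
  intro e he hxe
  rw [kempeSwap_apply_of_not_reachable he hxe hx]
  exact h e he hxe

theorem IsMissingAt.kempeSwap_of_ne (h : IsMissingAt A c x γ) (hα : γ ≠ α) (hβ : γ ≠ β) :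
    IsMissingAt A (kempeSwap A c α β z) x γ := by
  intro e he hxe
  by_cases hz : (kempeGraph A c α β).Reachable z x
  · rw [kempeSwap_apply_of_reachable hxe hz, ← Equiv.swap_apply_of_ne_of_ne hα hβ]
    exact (Equiv.swap α β).injective.ne (h e he hxe)
  · rw [kempeSwap_apply_of_not_reachable he hxe hz]
    exact h e he hxe

theorem IsMissingAt.kempeSwap_self (h : IsMissingAt A c z α) :
    IsMissingAt A (kempeSwap A c α β z) z β := by
  intro e he hze
  rw [kempeSwap_apply_of_reachable hze (SimpleGraph.Reachable.refl z)]
  exact fun h' =>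
    h e he hze ((Equiv.swap α β).injective (h'.trans (Equiv.swap_apply_left α β).symm))

end Kempe

section Fan

variable {u : V} {f : ℕ → V} {m i j : ℕ}

/-- A fan at `u` with vertices `f 0, …, f m`; `s(u, f 0)` is the edge still to be coloured. -/
structure IsFan (A : Finset (Sym2 V)) (c : Sym2 V → Fin k) (u : V) (f : ℕ → V) (m : ℕ) :
    Prop where
  injOn : Set.InjOn f (Set.Iic m)
  ne_center : ∀ i ≤ m, f i ≠ u
  mem : ∀ i < m, s(u, f (i + 1)) ∈ A
  isMissingAt : ∀ i < m, IsMissingAt A c (f i) (c s(u, f (i + 1)))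

theorem IsFan.of_le (hf : IsFan A c u f m) (h : j ≤ m) : IsFan A c u f j :=
  ⟨hf.injOn.mono (Set.Iic_subset_Iic.2 h), fun i hi => hf.ne_center i (hi.trans h),
    fun i hi => hf.mem i (hi.trans_le h), fun i hi => hf.isMissingAt i (hi.trans_le h)⟩

theorem IsFan.recolor (hf : IsFan A c u f m) {c' : Sym2 V → Fin k}
    (h : ∀ i < m, IsMissingAt A c' (f i) (c' s(u, f (i + 1)))) : IsFan A c' u f m :=
  ⟨hf.injOn, hf.ne_center, hf.mem, h⟩

theorem IsFan.ne_of_lt (hf : IsFan A c u f m) (hij : i < j) (hj : j ≤ m) : f i ≠ f j :=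
  fun h => hij.ne (hf.injOn (Set.mem_Iic.2 (hij.le.trans hj)) (Set.mem_Iic.2 hj) h)

theorem IsFan.eq_of_color_eq (hf : IsFan A c u f m) (hc : IsProperEdgeColoring A c)
    (hi : i < m) (hj : j < m) (h : c s(u, f (i + 1)) = c s(u, f (j + 1))) : i = j := by
  have := hf.injOn (Set.mem_Iic.2 hi) (Set.mem_Iic.2 hj)
    (hc.eq_of_mk_color_eq (hf.mem i hi) (hf.mem j hj) h)
  omega

theorem IsFan.extend (hf : IsFan A c u f m) {w : V} (hw : ∀ i ≤ m, f i ≠ w) (hwu : w ≠ u)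
    (hmem : s(u, w) ∈ A) (hmiss : IsMissingAt A c (f m) (c s(u, w))) :
    IsFan A c u (Function.update f (m + 1) w) (m + 1) := by
  have hlow : ∀ i ≤ m, Function.update f (m + 1) w i = f i :=
    fun i hi => Function.update_of_ne (by omega) _ _
  have htop : Function.update f (m + 1) w (m + 1) = w := Function.update_self _ _ _
  refine ⟨fun i hi j hj h => ?_, fun i hi => ?_, fun i hi => ?_, fun i hi => ?_⟩
  · simp only [Set.mem_Iic] at hi hj
    rcases hi.lt_or_eq with hi | rfl <;> rcases hj.lt_or_eq with hj | rfl
    · rw [hlow i (by omega), hlow j (by omega)] at h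
      exact hf.injOn (Set.mem_Iic.2 (by omega)) (Set.mem_Iic.2 (by omega)) h
    · exact absurd (by rwa [hlow i (by omega), htop] at h) (hw i (by omega))
    · exact absurd (by rwa [hlow j (by omega), htop, eq_comm] at h) (hw j (by omega))
    · rfl
  · rcases hi.lt_or_eq with hi | rfl
    · exact hlow i (by omega) ▸ hf.ne_center i (by omega)
    · rwa [htop]
  · rcases (Nat.lt_succ_iff.1 hi).lt_or_eq with hi | rfl
    · exact hlow (i + 1) hi ▸ hf.mem i hi
    · rwa [htop]
  · rw [hlow i (by omega)]
    rcases (Nat.lt_succ_iff.1 hi).lt_or_eq with hi | rfl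
    · exact hlow (i + 1) hi ▸ hf.isMissingAt i hi
    · rwa [htop]

end Fan

variable [DecidableEq V] {B : Finset (Sym2 V)}

theorem degF_mono_s10 (h : A ⊆ B) (x : V) : degF A x ≤ degF B x :=
  Finset.card_le_card (Finset.filter_subset_filter _ h)

theorem degF_erase_add_one {e : Sym2 V} (he : e ∈ A) {x : V} (hx : x ∈ e) :
    degF (A.erase e) x + 1 = degF A x := by
  rw [degF, degF, Finset.filter_erase, Finset.card_erase_add_one (Finset.mem_filter.2 ⟨he, hx⟩)]

theorem degF_erase_of_notMem_s10 {e : Sym2 V} {x : V} (hx : x ∉ e) :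
    degF (A.erase e) x = degF A x := by
  rw [degF, degF, Finset.filter_erase, Finset.erase_eq_of_notMem]
  exact fun h => hx (Finset.mem_filter.1 h).2

theorem exists_isMissingAt_of_degF_lt (c : Sym2 V → Fin k) {x : V} (h : degF A x < k) :
    ∃ γ, IsMissingAt A c x γ := by
  obtain ⟨γ, -, hγ⟩ := Finset.exists_mem_notMem_of_card_lt_card
    (s := (A.filter (x ∈ ·)).image c) (t := Finset.univ)
    (Finset.card_image_le.trans_lt (by simpa [degF] using h))
  exact ⟨γ, fun e he hxe hce => hγ (Finset.mem_image.2 ⟨e, Finset.mem_filter.2 ⟨he, hxe⟩, hce⟩)⟩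

theorem IsMissingAt.update_of_notMem {x : V} {γ δ : Fin k} {e : Sym2 V}
    (h : IsMissingAt A c x γ) (hx : x ∉ e) : IsMissingAt A (Function.update c e δ) x γ := by
  intro f hf hxf
  rw [Function.update_of_ne (by rintro rfl; exact hx hxf)]
  exact h f hf hxf

theorem IsProperEdgeColoring.update_insert (hc : IsProperEdgeColoring A c) {x y : V} {γ : Fin k}
    (hx : IsMissingAt A c x γ) (hy : IsMissingAt A c y γ) :
    IsProperEdgeColoring (insert s(x, y) A) (Function.update c s(x, y) γ) := by
  have hmiss : ∀ z ∈ s(x, y), IsMissingAt A c z γ := by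
    intro z hz
    rcases Sym2.mem_iff.1 hz with rfl | rfl
    exacts [hx, hy]
  intro z e f he hf hze hzf hcol
  by_cases he' : e = s(x, y) <;> by_cases hf' : f = s(x, y)
  · rw [he', hf']
  · subst he'
    rw [Function.update_self, Function.update_of_ne hf'] at hcol
    exact absurd hcol.symm (hmiss z hze f (Finset.mem_of_mem_insert_of_ne hf hf') hzf)
  · subst hf'
    rw [Function.update_self, Function.update_of_ne he'] at hcol
    exact absurd hcol (hmiss z hzf e (Finset.mem_of_mem_insert_of_ne he he') hze)
  · rw [Function.update_of_ne he', Function.update_of_ne hf'] at hcol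
    exact hc (Finset.mem_of_mem_insert_of_ne he he') (Finset.mem_of_mem_insert_of_ne hf hf')
      hze hzf hcol

section Vizing

variable {u : V} {f : ℕ → V} {m i : ℕ} {α β : Fin k}

theorem IsFan.le_degF (hf : IsFan A c u f m) : m ≤ degF A u := by
  have := Finset.card_le_card_of_injOn (fun i => s(u, f (i + 1)))
    (s := Finset.range m) (t := A.filter (u ∈ ·))
    (fun i hi => Finset.mem_filter.2 ⟨hf.mem i (Finset.mem_range.1 hi), Sym2.mem_mk_left _ _⟩)
    (fun i hi j hj h => by
      have := hf.injOn (Set.mem_Iic.2 (Finset.mem_range.1 hi))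
        (Set.mem_Iic.2 (Finset.mem_range.1 hj)) (Sym2.congr_right.1 h)
      omega)
  simpa [degF] using this

/-- Shifting the fan down: `s(u, f i)` takes over the colour of `s(u, f (i + 1))`, and the last
edge `s(u, f m)` gets the common missing colour `α`. -/
theorem IsFan.edgeColorable_insert (hc : IsProperEdgeColoring A c) (hf : IsFan A c u f m)
    (hu : IsMissingAt A c u α) (hm : IsMissingAt A c (f m) α) :
    EdgeColorable k (insert s(u, f 0) A) := by
  induction m generalizing c α with
  | zero => exact ⟨_, hc.update_insert hu hm⟩
  | succ m ih =>
    have he : s(u, f (m + 1)) ∈ A := hf.mem m m.lt_succ_self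
    have hc' := hc.update_insert hu hm
    rw [Finset.insert_eq_of_mem he] at hc'
    have hnot : ∀ i ≤ m, f i ∉ s(u, f (m + 1)) := fun i hi h =>
      (Sym2.mem_iff.1 h).elim (hf.ne_center i (by omega)) (hf.ne_of_lt (by omega) le_rfl)
    refine ih hc' ((hf.of_le m.le_succ).recolor fun i hi => ?_) (α := c s(u, f (m + 1))) ?_ ?_
    · rw [Function.update_of_ne fun h => hf.ne_of_lt (by omega) le_rfl (Sym2.congr_right.1 h)]
      exact (hf.isMissingAt i (by omega)).update_of_notMem (hnot i (by omega))
    · intro g hg hug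
      by_cases hge : g = s(u, f (m + 1))
      · rw [hge, Function.update_self]
        exact fun h => hu _ he (Sym2.mem_mk_left _ _) h.symm
      · rw [Function.update_of_ne hge]
        exact fun h => hge (hc hg he hug (Sym2.mem_mk_left _ _) h)
    · exact (hf.isMissingAt m m.lt_succ_self).update_of_notMem (hnot m le_rfl)

theorem IsFan.edgeColorable_insert_of_kempeSwap (hc : IsProperEdgeColoring A c)
    (hf : IsFan A c u f m) (hu : IsMissingAt A c u β) (hm : IsMissingAt A c (f m) α)
    (hmu : ¬(kempeGraph A c α β).Reachable (f m) u)
    (hα : ∀ i < m, c s(u, f (i + 1)) = α → ¬(kempeGraph A c α β).Reachable (f m) (f i)) :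
    EdgeColorable k (insert s(u, f 0) A) := by
  refine (hf.recolor fun i hi => ?_).edgeColorable_insert (isProperEdgeColoring_kempeSwap hc)
    (hu.kempeSwap_of_not_reachable hmu) hm.kempeSwap_self
  rw [kempeSwap_apply_of_not_reachable (hf.mem i hi) (Sym2.mem_mk_left _ _) hmu]
  by_cases hiα : c s(u, f (i + 1)) = α
  · exact (hf.isMissingAt i hi).kempeSwap_of_not_reachable (hα i hi hiα)
  · exact (hf.isMissingAt i hi).kempeSwap_of_ne hiα (hu _ (hf.mem i hi) (Sym2.mem_mk_left _ _))

theorem IsFan.edgeColorable_insert_of_color_eq (hc : IsProperEdgeColoring A c)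
    (hf : IsFan A c u f m) (hu : IsMissingAt A c u β) (hm : IsMissingAt A c (f m) α)
    (hi : i < m) (hci : c s(u, f (i + 1)) = α) : EdgeColorable k (insert s(u, f 0) A) := by
  have hti : IsMissingAt A c (f i) α := hci ▸ hf.isMissingAt i hi
  have honly : ∀ j < m, c s(u, f (j + 1)) = α → j = i :=
    fun j hj hj' => hf.eq_of_color_eq hc hj hi (hj'.trans hci.symm)
  by_cases hiu : (kempeGraph A c α β).Reachable (f i) u
  · -- `u` and `f i` are the two ends of one `α`/`β`-path, so `f m` lies on another component
    have hmu : ¬(kempeGraph A c α β).Reachable (f m) u := fun hmu =>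
      hf.ne_of_lt hi le_rfl <| hiu.symm.eq_of_neighborSet_subsingleton
        (fun _ _ => kempeGraph_neighborSet_diff_subsingleton hc)
        (kempeGraph_neighborSet_subsingleton hc (.inr hu))
        (kempeGraph_neighborSet_subsingleton hc (.inl hti))
        (kempeGraph_neighborSet_subsingleton hc (.inl hm))
        (hf.ne_center i hi.le).symm (hf.ne_center m le_rfl).symm hmu.symm
    refine hf.edgeColorable_insert_of_kempeSwap hc hu hm hmu fun j hj hj' => ?_
    rw [honly j hj hj']
    exact fun hmi => hmu (hmi.trans hiu)
  · exact (hf.of_le hi.le).edgeColorable_insert_of_kempeSwap hc hu hti hiu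
      fun j hj hj' => absurd (honly j (hj.trans hi) hj') hj.ne

theorem IsFan.edgeColorable_insert_or_extend (hA : ∀ e ∈ A, ¬e.IsDiag)
    (hc : IsProperEdgeColoring A c) (hf : IsFan A c u f m) (h0 : s(u, f 0) ∉ A)
    (hu : IsMissingAt A c u β) (hm : IsMissingAt A c (f m) α) :
    EdgeColorable k (insert s(u, f 0) A) ∨
      ∃ w, IsFan A c u (Function.update f (m + 1) w) (m + 1) := by
  by_cases hαu : IsMissingAt A c u α
  · exact .inl (hf.edgeColorable_insert hc hαu hm)
  obtain ⟨e, he, hue, hce⟩ : ∃ e ∈ A, u ∈ e ∧ c e = α := by simpa [IsMissingAt] using hαu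
  obtain ⟨w, rfl⟩ := Sym2.mem_iff_exists.1 hue
  by_cases hw : ∃ j ≤ m, f j = w
  · obtain ⟨j, hj, rfl⟩ := hw
    obtain ⟨i, rfl⟩ := Nat.exists_eq_add_one_of_ne_zero (n := j) (by rintro rfl; exact h0 he)
    exact .inl (hf.edgeColorable_insert_of_color_eq hc hu hm hj hce)
  · simp only [not_exists, not_and] at hw
    exact .inr ⟨w, hf.extend hw (fun h => hA _ he (Sym2.mk_isDiag_iff.2 h.symm)) he (hce ▸ hm)⟩

/-- Vizing's fan lemma. -/
theorem IsProperEdgeColoring.edgeColorable_insert (hA : ∀ e ∈ A, ¬e.IsDiag)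
    (hc : IsProperEdgeColoring A c) {v : V} (hu : ∃ β, IsMissingAt A c u β)
    (hN : ∀ x, s(u, x) ∈ insert s(u, v) A → ∃ γ, IsMissingAt A c x γ) :
    EdgeColorable k (insert s(u, v) A) := by
  obtain ⟨β, hβ⟩ := hu
  by_cases hv : s(u, v) ∈ A
  · exact ⟨c, by rwa [Finset.insert_eq_of_mem hv]⟩
  rcases eq_or_ne u v with rfl | huv
  · exact ⟨_, hc.update_insert hβ hβ⟩
  by_contra hcol
  have hfan : ∀ m, ∃ f, IsFan A c u f m ∧ f 0 = v := by
    intro m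
    induction m with
    | zero =>
      exact ⟨fun _ => v, ⟨fun i hi j hj _ => by simp_all, by simp [huv.symm], by simp, by simp⟩,
        rfl⟩
    | succ m ih =>
      obtain ⟨f, hf, rfl⟩ := ih
      have hum : s(u, f m) ∈ insert s(u, f 0) A := by
        cases m with
        | zero => exact Finset.mem_insert_self _ _
        | succ j => exact Finset.mem_insert_of_mem (hf.mem j j.lt_succ_self)
      obtain ⟨α, hα⟩ := hN (f m) hum
      obtain hcol' | ⟨w, hf'⟩ := hf.edgeColorable_insert_or_extend hA hc hv hβ hα
      · exact absurd hcol' hcol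
      · exact ⟨_, hf', Function.update_of_ne (Nat.succ_ne_zero m).symm _ _⟩
  obtain ⟨f, hf, -⟩ := hfan (degF A u + 1)
  exact absurd hf.le_degF (by omega)

end Vizing

theorem exists_mk_mem_forall_neighbor_degF_lt (hA : A.Nonempty)
    (hlow : ∀ e ∈ A, ∃ x ∈ e, degF A x < k) :
    ∃ u v, s(u, v) ∈ A ∧ ∀ x, s(u, x) ∈ A → degF A x < k := by
  by_cases hmax : ∃ u v, s(u, v) ∈ A ∧ k ≤ degF A u
  · obtain ⟨u, v, huv, hu⟩ := hmax
    refine ⟨u, v, huv, fun x hx => ?_⟩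
    obtain ⟨y, hy, hlt⟩ := hlow _ hx
    rcases Sym2.mem_iff.1 hy with rfl | rfl
    exacts [absurd hlt (not_lt.2 hu), hlt]
  · simp only [not_exists, not_and, not_le] at hmax
    obtain ⟨e, he⟩ := hA
    induction e using Sym2.ind with
    | h u v => exact ⟨u, v, he, fun x hx => hmax x u (Sym2.eq_swap ▸ hx)⟩

/-- Fournier's theorem, for maximum degree at most `k`. -/
theorem edgeColorable_of_forall_exists_degF_lt (hk : 0 < k) (A : Finset (Sym2 V))
    (hA : ∀ e ∈ A, ¬e.IsDiag) (hdeg : ∀ x, degF A x ≤ k)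
    (hlow : ∀ e ∈ A, ∃ x ∈ e, degF A x < k) : EdgeColorable k A := by
  induction A using Finset.strongInduction with
  | H A ih =>
    rcases A.eq_empty_or_nonempty with rfl | hne
    · exact ⟨fun _ => ⟨0, hk⟩, fun _ e _ he => absurd he (Finset.notMem_empty e)⟩
    obtain ⟨u, v, huv, hN⟩ := exists_mk_mem_forall_neighbor_degF_lt hne hlow
    have hsub : A.erase s(u, v) ⊆ A := Finset.erase_subset _ _
    obtain ⟨c, hc⟩ := ih _ (Finset.erase_ssubset huv) (fun e he => hA e (hsub he))
      (fun x => (degF_mono_s10 hsub x).trans (hdeg x))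
      (fun e he => (hlow e (hsub he)).imp fun x hx => ⟨hx.1, (degF_mono_s10 hsub x).trans_lt hx.2⟩)
    have hu : degF (A.erase s(u, v)) u < k := by
      have := degF_erase_add_one huv (Sym2.mem_mk_left u v)
      have := hdeg u
      omega
    have := hc.edgeColorable_insert (fun e he => hA e (hsub he))
      (exists_isMissingAt_of_degF_lt c hu) fun x hx => exists_isMissingAt_of_degF_lt c
        ((degF_mono_s10 hsub x).trans_lt (hN x (Finset.insert_erase huv ▸ hx)))
    rwa [Finset.insert_erase huv] at this

theorem IsProperEdgeColoring.degF_le_card_covers {F : Finset (Sym2 V)}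
    (hc : IsProperEdgeColoring F c) (v : V) :
    degF F v ≤ (Finset.univ.filter fun i => Covers (F.filter (c · = i)) v).card :=
  Finset.card_le_card_of_injOn c
    (fun e he => Finset.mem_filter.2 ⟨Finset.mem_univ _,
      e, Finset.mem_filter.2 ⟨(Finset.mem_filter.1 he).1, rfl⟩, (Finset.mem_filter.1 he).2⟩)
    (fun _ he _ hf => hc (Finset.mem_filter.1 he).1 (Finset.mem_filter.1 hf).1
      (Finset.mem_filter.1 he).2 (Finset.mem_filter.1 hf).2)

end EdgeColoring

section Factor

variable {V : Type*} [DecidableEq V]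

/-- `F` is an `(ℓ, k)`-factor of `G`. -/
def IsFactor (G : SimpleGraph V) (ℓ : V → ℕ) (k : ℕ) (F : Finset (Sym2 V)) : Prop :=
  ↑F ⊆ G.edgeSet ∧ ∀ v, ℓ v ≤ degF F v ∧ degF F v ≤ k

theorem IsFactor.exists_degF_lt_of_minimal {G : SimpleGraph V} {ℓ : V → ℕ} {k : ℕ}
    {F : Finset (Sym2 V)} (hℓ : ∀ v, ℓ v < k) (hF : IsFactor G ℓ k F)
    (hmin : ∀ F' ⊂ F, ¬IsFactor G ℓ k F') : ∀ e ∈ F, ∃ x ∈ e, degF F x < k := by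
  intro e he
  by_contra! h
  refine hmin _ (Finset.erase_ssubset he) ⟨fun f hf => hF.1 (Finset.mem_of_mem_erase hf),
    fun v => ⟨?_, (degF_mono_s10 (Finset.erase_subset e F) v).trans (hF.2 v).2⟩⟩
  by_cases hv : v ∈ e
  · have := degF_erase_add_one he hv
    have := h v hv
    have := hℓ v
    omega
  · rw [degF_erase_of_notMem_s10 hv]
    exact (hF.2 v).1

end Factor

theorem stmt_10_general {V : Type*} [DecidableEq V] (G : SimpleGraph V)
    (k : ℕ) (hk : 2 ≤ k) (ℓ : V → ℕ) (hℓ : ∀ v, ℓ v < k)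
    (F : Finset (Sym2 V))
    (hF : ↑F ⊆ G.edgeSet ∧ ∀ v : V, ℓ v ≤ degF F v ∧ degF F v ≤ k)
    (hmin : ∀ F' ⊂ F, ¬ (↑F' ⊆ G.edgeSet ∧ ∀ v : V, ℓ v ≤ degF F' v ∧ degF F' v ≤ k)) :
    ∃ M : Fin k → Finset (Sym2 V),
      (∀ i, IsMatching G (M i)) ∧
      (∀ i j, i ≠ j → Disjoint (M i) (M j)) ∧
      Finset.univ.sup M = F ∧
      ∀ v : V, ℓ v ≤ (Finset.univ.filter fun i => Covers (M i) v).card := by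
  obtain ⟨c, hc⟩ := edgeColorable_of_forall_exists_degF_lt (by omega) F
    (fun e he => G.not_isDiag_of_mem_edgeSet (hF.1 he)) (fun v => (hF.2 v).2)
    (IsFactor.exists_degF_lt_of_minimal hℓ hF hmin)
  refine ⟨fun i => F.filter (c · = i), hc.isMatching hF.1, fun i j hij => ?_, ?_,
    fun v => (hF.2 v).1.trans (hc.degF_le_card_covers v)⟩
  · exact Finset.disjoint_filter.2 fun e _ hi hj => hij (hi.symm.trans hj)
  · ext e
    simp [Finset.mem_sup]

theorem stmt_10 {V : Type*} [Fintype V] [DecidableEq V] (G : SimpleGraph V)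
    (k : ℕ) (hk : 2 ≤ k) (ℓ : V → ℕ) (hℓ : ∀ v, ℓ v < k)
    (F : Finset (Sym2 V))
    (hF : ↑F ⊆ G.edgeSet ∧ ∀ v : V, ℓ v ≤ degF F v ∧ degF F v ≤ k)
    (hmin : ∀ F' ⊂ F, ¬ (↑F' ⊆ G.edgeSet ∧ ∀ v : V, ℓ v ≤ degF F' v ∧ degF F' v ≤ k)) :
    ∃ M : Fin k → Finset (Sym2 V),
      (∀ i, IsMatching G (M i)) ∧
      (∀ i j, i ≠ j → Disjoint (M i) (M j)) ∧
      Finset.univ.sup M = F ∧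
      ∀ v : V, ℓ v ≤ (Finset.univ.filter fun i => Covers (M i) v).card :=
  stmt_10_general G k hk ℓ hℓ F hF hmin
end

section
/- Let G be a graph with every stable set S satisfying |S| ≤ |N(S)|. Then G has a perfect 2-matching, i.e., a collection of vertex-disjoint edges and circuits covering all vertices. Conversely, if G has a perfect 2-matching then |S| ≤ |N(S)| for every stable set S. -/
/-- `F` is a 2-matching of `G`: a vertex-disjoint collection of edges and circuits.
Equivalently, all degrees are at most 2 and any edge having an endpoint of degree 1
has both endpoints of degree 1 (so components are single edges or circuits). -/
def Is2Matching {V : Type*} [DecidableEq V] (G : SimpleGraph V) (F : Finset (Sym2 V)) : Prop :=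
  ↑F ⊆ G.edgeSet ∧ (∀ v : V, degF F v ≤ 2) ∧
    ∀ e ∈ F, ∀ u : V, u ∈ e → degF F u = 1 → ∀ w ∈ e, degF F w = 1

set_option maxHeartbeats 1000000 in
private theorem bwd {V : Type*} [Fintype V] [DecidableEq V] (G : SimpleGraph V) [DecidableRel G.Adj]
    (hHall : ∀ S : Finset V, IsStable G S → S.card ≤ (nbr G S).card) :
    ∃ F : Finset (Sym2 V), Is2Matching G F ∧ ∀ v : V, Covers F v := by
  classical
  have hall : ∀ A : Finset V, A.card ≤ (A.biUnion (fun a => G.neighborFinset a)).card := by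
    intro A
    set S := A.filter fun v => ∀ w ∈ A, ¬ G.Adj v w with hSdef
    have hSA : S ⊆ A := Finset.filter_subset _ _
    have hSstable : IsStable G S := by
      intro u hu v hv h
      exact (Finset.mem_filter.mp hu).2 v (hSA (by exact hv)) h
    have h1 : S.card ≤ (nbr G S).card := hHall S hSstable
    have hsub : nbr G S ∪ (A \ S) ⊆ A.biUnion (fun a => G.neighborFinset a) := by
      intro w hw
      rcases Finset.mem_union.mp hw with hw | hw
      · obtain ⟨-, -, u, hu, hadj⟩ := Finset.mem_filter.mp hw
        exact Finset.mem_biUnion.mpr ⟨u, hSA hu, (G.mem_neighborFinset u w).mpr hadj⟩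
      · obtain ⟨hwA, hwS⟩ := Finset.mem_sdiff.mp hw
        have : ¬ ∀ x ∈ A, ¬ G.Adj w x := fun h => hwS (Finset.mem_filter.mpr ⟨hwA, h⟩)
        push_neg at this
        obtain ⟨x, hxA, hadj⟩ := this
        exact Finset.mem_biUnion.mpr ⟨x, hxA, (G.mem_neighborFinset x w).mpr hadj.symm⟩
    have hdisj : Disjoint (nbr G S) (A \ S) := by
      rw [Finset.disjoint_left]
      intro w hw hw'
      obtain ⟨-, -, u, hu, hadj⟩ := Finset.mem_filter.mp hw
      exact (Finset.mem_filter.mp hu).2 w (Finset.mem_sdiff.mp hw').1 hadj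
    calc A.card = S.card + (A \ S).card := by
          rw [← Finset.card_sdiff_add_card_eq_card hSA]; omega
      _ ≤ (nbr G S).card + (A \ S).card := by omega
      _ = (nbr G S ∪ (A \ S)).card := (Finset.card_union_of_disjoint hdisj).symm
      _ ≤ _ := Finset.card_le_card hsub
  obtain ⟨f, hinj, hf⟩ := (Finset.all_card_le_biUnion_card_iff_exists_injective
    (fun a => G.neighborFinset a)).mp hall
  have hadj : ∀ v, G.Adj v (f v) := fun v => (G.mem_neighborFinset v (f v)).mp (hf v)
  have hne : ∀ v, f v ≠ v := fun v => (hadj v).ne'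
  let g : V ≃ V := Equiv.ofBijective f (Finite.injective_iff_bijective.mp hinj)
  have hg : ∀ v, g v = f v := fun v => rfl
  set F : Finset (Sym2 V) := Finset.univ.image fun v => s(v, f v) with hFdef
  have filter_eq : ∀ v : V, F.filter (fun e => v ∈ e) = {s(v, f v), s(g.symm v, v)} := by
    intro v
    ext e
    simp only [Finset.mem_filter, hFdef, Finset.mem_image, Finset.mem_univ, true_and,
      Finset.mem_insert, Finset.mem_singleton]
    constructor
    · rintro ⟨⟨u, rfl⟩, hv⟩
      rcases Sym2.mem_iff.mp hv with rfl | rfl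
      · exact Or.inl rfl
      · refine Or.inr ?_
        have : g.symm (f u) = u := g.symm_apply_apply u
        rw [this]
    · rintro (rfl | rfl)
      · exact ⟨⟨v, rfl⟩, Sym2.mem_mk_left _ _⟩
      · refine ⟨⟨g.symm v, ?_⟩, Sym2.mem_mk_right _ _⟩
        have : f (g.symm v) = v := g.apply_symm_apply v
        rw [this]
  have eq_iff : ∀ v : V, s(v, f v) = s(g.symm v, v) ↔ f (f v) = v := by
    intro v
    rw [Sym2.eq_iff]
    constructor
    · rintro (⟨h1, h2⟩ | ⟨-, h2⟩)
      · exact absurd h2 (hne v)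
      · rw [h2]; exact g.apply_symm_apply v
    · intro h
      refine Or.inr ⟨rfl, hinj ?_⟩
      rw [h]
      exact (g.apply_symm_apply v).symm
  have deg_eq : ∀ v : V, degF F v = if f (f v) = v then 1 else 2 := by
    intro v
    rw [degF, filter_eq v]
    by_cases h : f (f v) = v
    · rw [if_pos h, ← (eq_iff v).mpr h]
      simp
    · rw [if_neg h]
      rw [Finset.card_insert_of_notMem, Finset.card_singleton]
      simp only [Finset.mem_singleton]
      intro hc
      exact h ((eq_iff v).mp hc)
  refine ⟨F, ⟨?_, ?_, ?_⟩, ?_⟩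
  · intro e he
    simp only [hFdef, Finset.coe_image, Set.mem_image, Finset.mem_coe] at he
    obtain ⟨u, -, rfl⟩ := he
    exact (hadj u)
  · intro v; rw [deg_eq]; split <;> omega
  · intro e he u hu hdu w hw
    simp only [hFdef, Finset.mem_image, Finset.mem_univ, true_and] at he
    obtain ⟨x, rfl⟩ := he
    rw [deg_eq] at hdu ⊢
    have hdux : f (f u) = u := by by_contra hc; rw [if_neg hc] at hdu; omega
    have key : f (f x) = x := by
      rcases Sym2.mem_iff.mp hu with rfl | rfl
      · exact hdux
      · exact hinj hdux
    rcases Sym2.mem_iff.mp hw with rfl | rfl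
    · rw [if_pos key]
    · rw [if_pos (by rw [key])]
  · intro v
    exact ⟨s(v, f v), Finset.mem_image.mpr ⟨v, Finset.mem_univ v, rfl⟩, Sym2.mem_mk_left _ _⟩


private theorem fwd {V : Type*} [Fintype V] [DecidableEq V] (G : SimpleGraph V) [DecidableRel G.Adj]
    (F : Finset (Sym2 V)) (hM : Is2Matching G F) (hcov : ∀ v : V, Covers F v)
    (S : Finset V) (hS : IsStable G S) : S.card ≤ (nbr G S).card := by
  classical
  obtain ⟨hE, hdeg, hcirc⟩ := hM
  set wt : Sym2 V → ℕ := fun e => if ∃ u ∈ e, degF F u = 1 then 2 else 1 with hwt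
  -- the weighted degree of every vertex is exactly 2
  have W_eq : ∀ v : V, ∑ e ∈ F.filter (fun e => v ∈ e), wt e = 2 := by
    intro v
    obtain ⟨e₀, he₀F, he₀v⟩ := hcov v
    have hd1 : 1 ≤ degF F v := Finset.card_pos.mpr ⟨e₀, Finset.mem_filter.mpr ⟨he₀F, he₀v⟩⟩
    have hd2 : degF F v ≤ 2 := hdeg v
    interval_cases h : degF F v
    · -- degF F v = 1
      obtain ⟨e, he⟩ := Finset.card_eq_one.mp h
      rw [he, Finset.sum_singleton]
      have hve : v ∈ e := by
        have h' : e ∈ F.filter (fun e => v ∈ e) := he ▸ Finset.mem_singleton_self e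
        exact (Finset.mem_filter.mp h').2
      rw [hwt]
      simp only
      rw [if_pos (⟨v, hve, h⟩ : ∃ u ∈ e, degF F u = 1)]
    · -- degF F v = 2 : every incident edge has weight 1
      have : ∀ e ∈ F.filter (fun e => v ∈ e), wt e = 1 := by
        intro e he
        obtain ⟨heF, hev⟩ := Finset.mem_filter.mp he
        rw [hwt]
        simp only
        rw [if_neg]
        rintro ⟨u, hue, hu1⟩
        have := hcirc e heF u hue hu1 v hev
        omega
      rw [Finset.sum_congr rfl this, Finset.sum_const, smul_eq_mul]
      have : (F.filter (fun e => v ∈ e)).card = 2 := h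
      omega
  -- double counting identity
  have count : ∀ T : Finset V, ∑ v ∈ T, ∑ e ∈ F.filter (fun e => v ∈ e), wt e
      = ∑ e ∈ F, wt e * (T.filter (fun v => v ∈ e)).card := by
    intro T
    have : ∀ v ∈ T, ∑ e ∈ F.filter (fun e => v ∈ e), wt e
        = ∑ e ∈ F, if v ∈ e then wt e else 0 := by
      intro v _
      rw [Finset.sum_filter]
    rw [Finset.sum_congr rfl this, Finset.sum_comm]
    refine Finset.sum_congr rfl fun e _ => ?_
    rw [← Finset.sum_filter, Finset.sum_const, smul_eq_mul, mul_comm]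
  -- each edge meets S at most once
  have cS_le : ∀ e ∈ F, (S.filter (fun v => v ∈ e)).card ≤ 1 := by
    intro e heF
    rw [Finset.card_le_one]
    intro a ha b hb
    obtain ⟨haS, hae⟩ := Finset.mem_filter.mp ha
    obtain ⟨hbS, hbe⟩ := Finset.mem_filter.mp hb
    by_contra hab
    induction e with
    | _ x y =>
      have hadj : G.Adj x y := hE heF
      rcases Sym2.mem_iff.mp hae with rfl | rfl <;> rcases Sym2.mem_iff.mp hbe with rfl | rfl
      · exact hab rfl
      · exact hS a haS b hbS hadj
      · exact hS b hbS a haS hadj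
      · exact hab rfl
  -- each edge meeting S meets N(S)
  have cN_ge : ∀ e ∈ F, (S.filter (fun v => v ∈ e)).card ≥ 1 →
      ((nbr G S).filter (fun v => v ∈ e)).card ≥ 1 := by
    intro e heF hge
    obtain ⟨a, ha⟩ := Finset.card_pos.mp hge
    obtain ⟨haS, hae⟩ := Finset.mem_filter.mp ha
    induction e with
    | _ x y =>
      have hadj : G.Adj x y := hE heF
      rcases Sym2.mem_iff.mp hae with rfl | rfl
      · have hyS : y ∉ S := fun hy => hS a haS y hy hadj
        exact Finset.card_pos.mpr ⟨y, Finset.mem_filter.mpr ⟨Finset.mem_filter.mpr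
          ⟨Finset.mem_univ y, hyS, a, haS, hadj⟩, Sym2.mem_mk_right _ _⟩⟩
      · have hxS : x ∉ S := fun hx => hS x hx a haS hadj
        exact Finset.card_pos.mpr ⟨x, Finset.mem_filter.mpr ⟨Finset.mem_filter.mpr
          ⟨Finset.mem_univ x, hxS, a, haS, hadj.symm⟩, Sym2.mem_mk_left _ _⟩⟩
  have main : 2 * S.card ≤ 2 * (nbr G S).card := by
    calc 2 * S.card = ∑ v ∈ S, ∑ e ∈ F.filter (fun e => v ∈ e), wt e := by
          rw [Finset.sum_congr rfl fun v _ => W_eq v, Finset.sum_const, smul_eq_mul, mul_comm]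
      _ = ∑ e ∈ F, wt e * (S.filter (fun v => v ∈ e)).card := count S
      _ ≤ ∑ e ∈ F, wt e * ((nbr G S).filter (fun v => v ∈ e)).card := by
          refine Finset.sum_le_sum fun e he => ?_
          rcases Nat.eq_zero_or_pos (S.filter (fun v => v ∈ e)).card with h0 | h1
          · rw [h0]; omega
          · have h1' := cS_le e he
            have h2 := cN_ge e he h1
            have : (S.filter (fun v => v ∈ e)).card = 1 := by omega
            rw [this]
            exact Nat.mul_le_mul_left _ h2
      _ = ∑ v ∈ nbr G S, ∑ e ∈ F.filter (fun e => v ∈ e), wt e := (count (nbr G S)).symm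
      _ = 2 * (nbr G S).card := by
          rw [Finset.sum_congr rfl fun v _ => W_eq v, Finset.sum_const, smul_eq_mul, mul_comm]
  omega


theorem stmt_13 {V : Type*} [Fintype V] [DecidableEq V] (G : SimpleGraph V) [DecidableRel G.Adj] :
    (∃ F : Finset (Sym2 V), Is2Matching G F ∧ ∀ v : V, Covers F v) ↔
      ∀ S : Finset V, IsStable G S → S.card ≤ (nbr G S).card := by
  constructor
  · rintro ⟨F, hM, hcov⟩ S hS
    exact fwd G F hM hcov S hS
  · exact bwd G
end
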